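/- arXiv:1604.02407 — 5 statements merged into one kernel-verified Lean document; each statement's English description precedes it below -/
import Mathlib

section
/- Let W : ℝ → [0,∞) be a continuous potential satisfying hypotheses (w2)–(w4) and let q* > 0 be the constant of the one-dimensional interpolation inequality. Then for every q ≤ q*/4, every bounded open interval I, every 0 < ε ≤ ℒ¹(I), and every C² function u on the closure of I, q ε² ∫_I (u')² dx ≤ ∫_I ( W(u) + ε⁴ (u'')² ) dx. -/
open MeasureTheory Real

/-- Hypotheses (w2)–(w4) for a continuous nonnegative potential. -/
def WCont (W : ℝ → ℝ) : Prop :=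
  Continuous W ∧ (∀ s, 0 ≤ W s) ∧ (∀ s, 0 ≤ s → s ≠ 1 → 0 < W s) ∧ W 1 = 0 ∧
  ∃ cW : ℝ, 0 < cW ∧ cW ≤ 1 ∧ ∀ s, 0 ≤ s → cW * |s - 1|^2 ≤ W s

/-! Cut `I` into `N` intervals of equal length `L ∈ [ε/2, ε]`. On an interval of length `L`
the interpolation inequality, multiplied by `ε²/4`, gives
`(q*/4) ε² ∫ (u')² ≤ (ε/2L)² ∫ W(u) + (εL/2)² ∫ (u'')² ≤ ∫ W(u) + ε⁴ ∫ (u'')²`;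
summing over the `N` intervals gives the inequality on `I`. -/

theorem exists_nat_div_mem_Icc {ℓ ε : ℝ} (hε : 0 < ε) (hεℓ : ε ≤ ℓ) :
    ∃ N : ℕ, 0 < N ∧ ℓ / N ∈ Set.Icc (ε / 2) ε := by
  have hℓε : 1 ≤ ℓ / ε := (one_le_div hε).mpr hεℓ
  refine ⟨⌈ℓ / ε⌉₊, Nat.ceil_pos.mpr (by linarith), ?_, ?_⟩
  · have hN : (⌈ℓ / ε⌉₊ : ℝ) < ℓ / ε + 1 := Nat.ceil_lt_add_one (by linarith)
    have hNpos : (0 : ℝ) < ⌈ℓ / ε⌉₊ := by linarith [Nat.le_ceil (ℓ / ε)]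
    rw [le_div_iff₀ hNpos]
    calc ε / 2 * ⌈ℓ / ε⌉₊ ≤ ε / 2 * (2 * (ℓ / ε)) := by gcongr; linarith
      _ = ℓ := by field_simp
  · rw [div_le_iff₀ (by linarith [Nat.le_ceil (ℓ / ε)])]
    calc ℓ = ε * (ℓ / ε) := by field_simp
      _ ≤ ε * ⌈ℓ / ε⌉₊ := by gcongr; exact Nat.le_ceil _

theorem intervalIntegral.integral_le_integral_of_uniform_partition {f g : ℝ → ℝ}
    (hf : Continuous f) (hg : Continuous g) {a b : ℝ} {N : ℕ} (hN : N ≠ 0)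
    (h : ∀ c, ∫ x in c..c + (b - a) / N, f x ≤ ∫ x in c..c + (b - a) / N, g x) :
    ∫ x in a..b, f x ≤ ∫ x in a..b, g x := by
  set t : ℕ → ℝ := fun i => a + i * ((b - a) / N)
  have ht0 : t 0 = a := by simp [t]
  have htN : t N = b := by simp only [t]; field_simp; ring
  have htsucc : ∀ i, t (i + 1) = t i + (b - a) / N := fun i => by simp only [t]; push_cast; ring
  have hsplit : ∀ φ : ℝ → ℝ, Continuous φ →
      ∑ i ∈ Finset.range N, ∫ x in t i..t (i + 1), φ x = ∫ x in a..b, φ x := fun φ hφ => by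
    rw [intervalIntegral.sum_integral_adjacent_intervals
      (fun _ _ => hφ.intervalIntegrable _ _), ht0, htN]
  rw [← hsplit f hf, ← hsplit g hg]
  exact Finset.sum_le_sum fun i _ => htsucc i ▸ h (t i)

theorem rescale_interpolation_inequality {q L ε A B C : ℝ} (hL : 0 < L) (hεL : ε ≤ 2 * L)
    (hLε : L ≤ ε) (hB : 0 ≤ B) (hC : 0 ≤ C) (h : q * A ≤ 1 / L ^ 2 * B + L ^ 2 * C) :
    q / 4 * ε ^ 2 * A ≤ B + ε ^ 4 * C := by
  have hB' : ε ^ 2 / 4 * (1 / L ^ 2) ≤ 1 := by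
    rw [div_mul_div_comm, div_le_one (by positivity)]
    nlinarith
  have hC' : ε ^ 2 / 4 * L ^ 2 ≤ ε ^ 4 := by
    have : L ^ 2 ≤ ε ^ 2 := pow_le_pow_left₀ hL.le hLε 2
    nlinarith [mul_le_mul_of_nonneg_left this (sq_nonneg ε)]
  calc q / 4 * ε ^ 2 * A = ε ^ 2 / 4 * (q * A) := by ring
    _ ≤ ε ^ 2 / 4 * (1 / L ^ 2 * B + L ^ 2 * C) := by gcongr
    _ = ε ^ 2 / 4 * (1 / L ^ 2) * B + ε ^ 2 / 4 * L ^ 2 * C := by ring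
    _ ≤ 1 * B + ε ^ 4 * C := by gcongr
    _ = B + ε ^ 4 * C := by ring

theorem ContDiff.continuous_deriv_deriv {u : ℝ → ℝ} (hu : ContDiff ℝ 2 u) :
    Continuous (deriv (deriv u)) := by
  simpa [iteratedDeriv_succ] using hu.continuous_iteratedDeriv' 2

theorem stmt4_general (W : ℝ → ℝ) (hW : WCont W) (qs : ℝ)
    -- qs is the constant of the one-dimensional interpolation inequality
    (hinterp : ∀ a b : ℝ, a < b → ∀ u : ℝ → ℝ, ContDiff ℝ 2 u →
      qs * ∫ x in a..b, (deriv u x)^2 ≤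
        (1 / (b - a)^2) * (∫ x in a..b, W (u x)) +
          (b - a)^2 * ∫ x in a..b, (deriv (deriv u) x)^2) :
    ∀ q : ℝ, q ≤ qs / 4 → ∀ a b : ℝ, a < b → ∀ ε : ℝ, 0 < ε → ε ≤ b - a →
    ∀ u : ℝ → ℝ, ContDiff ℝ 2 u →
      q * ε^2 * ∫ x in a..b, (deriv u x)^2 ≤
        ∫ x in a..b, (W (u x) + ε^4 * (deriv (deriv u) x)^2) := by
  intro q hq a b hab ε hε hεb u hu
  obtain ⟨hWc, hW0, -⟩ := hW
  have hu1 : Continuous fun x => deriv u x ^ 2 := (hu.continuous_deriv one_le_two).pow 2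
  have hu2 : Continuous fun x => deriv (deriv u) x ^ 2 := hu.continuous_deriv_deriv.pow 2
  have hWu : Continuous fun x => W (u x) := hWc.comp hu.continuous
  obtain ⟨N, hN, hεL, hLε⟩ := exists_nat_div_mem_Icc hε hεb
  have hL : 0 < (b - a) / N := by positivity
  calc q * ε ^ 2 * ∫ x in a..b, deriv u x ^ 2
      ≤ qs / 4 * ε ^ 2 * ∫ x in a..b, deriv u x ^ 2 := by
        gcongr
        exact intervalIntegral.integral_nonneg hab.le fun _ _ => sq_nonneg _
    _ = ∫ x in a..b, qs / 4 * ε ^ 2 * deriv u x ^ 2 :=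
        (intervalIntegral.integral_const_mul _ _).symm
    _ ≤ ∫ x in a..b, (W (u x) + ε ^ 4 * deriv (deriv u) x ^ 2) := by
      refine intervalIntegral.integral_le_integral_of_uniform_partition
        (by fun_prop) (by fun_prop) hN.ne' fun c => ?_
      have hc : c < c + (b - a) / N := by linarith
      rw [intervalIntegral.integral_const_mul,
        intervalIntegral.integral_add (g := fun x => ε ^ 4 * deriv (deriv u) x ^ 2)
          (hWu.intervalIntegrable _ _) ((continuous_const.mul hu2).intervalIntegrable _ _),
        intervalIntegral.integral_const_mul]
      refine rescale_interpolation_inequality hL (by linarith) hLε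
        (intervalIntegral.integral_nonneg hc.le fun _ _ => hW0 _)
        (intervalIntegral.integral_nonneg hc.le fun _ _ => sq_nonneg _) ?_
      simpa using hinterp c _ hc u hu

theorem stmt4 (W : ℝ → ℝ) (hW : WCont W) (qs : ℝ) (hqs : 0 < qs)
    -- qs is the constant of the one-dimensional interpolation inequality
    (hinterp : ∀ a b : ℝ, a < b → ∀ u : ℝ → ℝ, ContDiff ℝ 2 u →
      qs * ∫ x in a..b, (deriv u x)^2 ≤
        (1 / (b - a)^2) * (∫ x in a..b, W (u x)) +
          (b - a)^2 * ∫ x in a..b, (deriv (deriv u) x)^2) :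
    ∀ q : ℝ, q ≤ qs / 4 → ∀ a b : ℝ, a < b → ∀ ε : ℝ, 0 < ε → ε ≤ b - a →
    ∀ u : ℝ → ℝ, ContDiff ℝ 2 u →
      q * ε^2 * ∫ x in a..b, (deriv u x)^2 ≤
        ∫ x in a..b, (W (u x) + ε^4 * (deriv (deriv u) x)^2) :=
  stmt4_general W hW qs hinterp
end

section
/- Let A be a real 4×4 matrix whose complexification has exactly the four distinct eigenvalues γ + δi, γ − δi, −γ + δi, −γ − δi, with γ > 0 and δ ≠ 0. Then there exists a constant C > 0, depending only on A, such that for every L > 0, every T > 0, every 0 < λ ≤ γ, and every differentiable y : [0,T] → ℝ⁴ satisfying y'(t) = A y(t) and |y(t)| ≤ L for all t ∈ [0,T], one has |y(t)| ≤ C L exp(−λT/2) for all t ∈ [λT/(2γ), T − λT/(2γ)]. -/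
/-!
A left eigenvector `w` of the complexification of `A` turns a solution `y` into the scalar
solution `t ↦ w ⬝ᵥ y t` of `z' = μ z`, whose modulus is `‖z s‖ e^{Re μ (t - s)}`. Comparing with
time `T` when `Re μ ≥ γ` and with time `0` when `Re μ ≤ -γ`, the bound `L` on `[0, T]` gives
`‖z t‖ ≲ L e^{-γ a}` on `[a, T - a]`. The eigenvalues being distinct, the eigenvectors form a
basis, so these finitely many functionals control `‖y t‖`; take `a = λT / (2γ)`.
-/

open Set Matrix Real

section ScalarODE

variable {z : ℝ → ℂ} {μ : ℂ}

lemma eq_mul_cexp_of_hasDerivAt {a b : ℝ} (hz : ∀ t ∈ Icc a b, HasDerivAt z (μ * z t) t)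
    {t : ℝ} (ht : t ∈ Icc a b) : z t = z a * Complex.exp (μ * (t - a)) := by
  set g : ℝ → ℂ := fun s => z s * Complex.exp (-μ * (s - a))
  have hg : ∀ s ∈ Icc a b, HasDerivAt g 0 s := by
    intro s hs
    have hlin : HasDerivAt (fun u : ℝ => -μ * ((u : ℂ) - a)) (-μ) s := by
      simpa using (((hasDerivAt_id s).ofReal_comp).sub_const (a : ℂ)).const_mul (-μ)
    exact ((hz s hs).fun_mul hlin.cexp).congr_deriv (by ring)
  have hconst : g t = z a := by
    simpa [g] using constant_of_has_deriv_right_zero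
      (fun s hs => (hg s hs).continuousAt.continuousWithinAt)
      (fun s hs => (hg s (Ico_subset_Icc_self hs)).hasDerivWithinAt) t ht
  rw [← hconst, mul_assoc, ← Complex.exp_add]
  simp

lemma norm_eq_mul_exp_of_hasDerivAt {a b : ℝ} (hz : ∀ t ∈ Icc a b, HasDerivAt z (μ * z t) t)
    {s t : ℝ} (hs : s ∈ Icc a b) (ht : t ∈ Icc a b) :
    ‖z t‖ = ‖z s‖ * exp (μ.re * (t - s)) := by
  have hnorm : ∀ u ∈ Icc a b, ‖z u‖ = ‖z a‖ * exp (μ.re * (u - a)) := fun u hu => by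
    rw [eq_mul_cexp_of_hasDerivAt hz hu, norm_mul, Complex.norm_exp]
    simp [Complex.mul_re]
  rw [hnorm t ht, hnorm s hs, mul_assoc, ← exp_add]
  ring_nf

lemma norm_le_mul_exp_of_hasDerivAt {T K γ a t : ℝ}
    (hz : ∀ t ∈ Icc 0 T, HasDerivAt z (μ * z t) t) (hK : ∀ s ∈ Icc 0 T, ‖z s‖ ≤ K)
    (hγ : 0 ≤ γ) (hμ : γ ≤ |μ.re|) (ha : 0 ≤ a) (ht : t ∈ Icc a (T - a)) :
    ‖z t‖ ≤ K * exp (-(γ * a)) := by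
  have ht' : t ∈ Icc 0 T := ⟨ha.trans ht.1, ht.2.trans (by linarith)⟩
  rcases le_total 0 μ.re with hre | hre
  · have hT : T ∈ Icc 0 T := ⟨ht'.1.trans ht'.2, le_rfl⟩
    rw [abs_of_nonneg hre] at hμ
    rw [norm_eq_mul_exp_of_hasDerivAt hz hT ht']
    gcongr
    · exact (norm_nonneg _).trans (hK t ht')
    · exact hK T hT
    · nlinarith [ht.2]
  · have h0 : (0 : ℝ) ∈ Icc 0 T := ⟨le_rfl, ht'.1.trans ht'.2⟩
    rw [abs_of_nonpos hre] at hμ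
    rw [norm_eq_mul_exp_of_hasDerivAt hz h0 ht']
    gcongr
    · exact (norm_nonneg _).trans (hK t ht')
    · exact hK 0 h0
    · nlinarith [ht.1]

end ScalarODE

section Hyperbolic

variable {E ι : Type*} [NormedAddCommGroup E] [NormedSpace ℝ E] [Fintype ι]

lemma ContinuousLinearMap.exists_norm_le_mul_norm_of_injective {F : Type*}
    [NormedAddCommGroup F] [NormedSpace ℝ F] [FiniteDimensional ℝ F] {Φ : E →L[ℝ] F}
    (hΦ : Function.Injective Φ) : ∃ C ≥ 0, ∀ x, ‖x‖ ≤ C * ‖Φ x‖ := by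
  obtain ⟨Ψ, hΨ⟩ := HasLeftInverse.of_injective_of_finiteDimensional hΦ
  refine ⟨‖Ψ‖, norm_nonneg _, fun x => ?_⟩
  calc ‖x‖ = ‖Ψ (Φ x)‖ := by rw [hΨ x]
    _ ≤ ‖Ψ‖ * ‖Φ x‖ := Ψ.le_opNorm _

theorem exists_norm_le_mul_exp_of_hasDerivAt_of_eigenfunctionals {f : E → E}
    {φ : ι → E →L[ℝ] ℂ} {μ : ι → ℂ} {γ : ℝ} (hφf : ∀ i x, φ i (f x) = μ i * φ i x)
    (hφ : ∀ x, (∀ i, φ i x = 0) → x = 0) (hγ : 0 ≤ γ) (hμ : ∀ i, γ ≤ |(μ i).re|) :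
    ∃ C, ∀ L T a : ℝ, 0 ≤ a → ∀ y : ℝ → E, (∀ t ∈ Icc 0 T, HasDerivAt y (f (y t)) t) →
      (∀ t ∈ Icc 0 T, ‖y t‖ ≤ L) → ∀ t ∈ Icc a (T - a), ‖y t‖ ≤ C * L * exp (-(γ * a)) := by
  have hinj : Function.Injective (ContinuousLinearMap.pi φ) :=
    (injective_iff_map_eq_zero _).2 fun x hx => hφ x fun i => congr_fun hx i
  obtain ⟨C, hC0, hC⟩ := ContinuousLinearMap.exists_norm_le_mul_norm_of_injective hinj
  refine ⟨C * ‖φ‖, fun L T a ha y hy hyL t ht => ?_⟩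
  have hL : 0 ≤ L := (norm_nonneg _).trans (hyL t ⟨ha.trans ht.1, ht.2.trans (by linarith)⟩)
  have hφy : ∀ i, ∀ s ∈ Icc 0 T, HasDerivAt (fun s => φ i (y s)) (μ i * φ i (y s)) s :=
    fun i s hs => hφf i (y s) ▸ (φ i).hasFDerivAt.comp_hasDerivAt s (hy s hs)
  have hbound : ∀ i, ∀ s ∈ Icc 0 T, ‖φ i (y s)‖ ≤ ‖φ‖ * L := fun i s hs =>
    (φ i).le_of_opNorm_le_of_le (norm_le_pi_norm φ i) (hyL s hs)
  have hdecay : ‖ContinuousLinearMap.pi φ (y t)‖ ≤ ‖φ‖ * L * exp (-(γ * a)) :=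
    (pi_norm_le_iff_of_nonneg (by positivity)).2 fun i =>
      norm_le_mul_exp_of_hasDerivAt (hφy i) (hbound i) hγ (hμ i) ha ht
  calc ‖y t‖ ≤ C * ‖ContinuousLinearMap.pi φ (y t)‖ := hC _
    _ ≤ C * (‖φ‖ * L * exp (-(γ * a))) := by gcongr
    _ = C * ‖φ‖ * L * exp (-(γ * a)) := by ring

end Hyperbolic

section EigenvectorsOfMatrix

variable {n : Type*} [Fintype n]

lemma Matrix.exists_vecMul_eq_smul_of_isRoot_charpoly [DecidableEq n] {K : Type*} [Field K]
    {M : Matrix n n K} {μ : K} (hμ : M.charpoly.IsRoot μ) : ∃ w ≠ 0, w ᵥ* M = μ • w := by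
  rw [← charpoly_transpose, ← charpoly_toLin',
    ← Module.End.hasEigenvalue_iff_isRoot_charpoly] at hμ
  obtain ⟨w, hw, hw0⟩ := hμ.exists_hasEigenvector.imp fun w h => Module.End.hasEigenvector_iff.1 h
  exact ⟨w, hw0, by simpa [← mulVec_transpose] using hw⟩

noncomputable def dotOfReal (w : n → ℂ) : EuclideanSpace ℝ n →L[ℝ] ℂ :=
  ∑ j, w j • Complex.ofRealCLM.comp (EuclideanSpace.proj j)

lemma dotOfReal_apply (w : n → ℂ) (x : EuclideanSpace ℝ n) :
    dotOfReal w x = w ⬝ᵥ fun j => (x j : ℂ) := by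
  simp [dotOfReal, dotProduct]

lemma dotOfReal_mulVec {A : Matrix n n ℝ} {w : n → ℂ} {μ : ℂ}
    (hw : w ᵥ* A.map Complex.ofReal = μ • w) (x : EuclideanSpace ℝ n) :
    dotOfReal w ((WithLp.equiv 2 (n → ℝ)).symm (A *ᵥ WithLp.equiv 2 (n → ℝ) x)) =
      μ * dotOfReal w x := by
  have hcast : (fun j => ((A *ᵥ x.ofLp) j : ℂ)) = A.map Complex.ofReal *ᵥ fun j => (x j : ℂ) :=
    funext fun j => RingHom.map_mulVec Complex.ofRealHom A x.ofLp j
  simp [dotOfReal_apply, hcast, dotProduct_mulVec, hw]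

lemma eq_zero_of_dotOfReal_eq_zero [DecidableEq n] {w : n → n → ℂ} (hw : LinearIndependent ℂ w)
    {x : EuclideanSpace ℝ n} (hx : ∀ i, dotOfReal (w i) x = 0) : x = 0 := by
  have hW : IsUnit (Matrix.of w) := linearIndependent_rows_iff_isUnit.1 hw
  have hxc : (fun j => (x j : ℂ)) = 0 := mulVec_injective_iff_isUnit.2 hW <| by
    ext i
    simpa [dotOfReal_apply, mulVec] using hx i
  ext j
  simpa using congr_fun hxc j

theorem Matrix.exists_norm_le_mul_exp_of_isRoot_charpoly [DecidableEq n] (A : Matrix n n ℝ)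
    {μ : n → ℂ} (hμ : Function.Injective μ)
    (hroot : ∀ i, (A.map Complex.ofReal).charpoly.IsRoot (μ i))
    {γ : ℝ} (hγ : 0 ≤ γ) (hre : ∀ i, γ ≤ |(μ i).re|) :
    ∃ C, ∀ L T a : ℝ, 0 ≤ a → ∀ y : ℝ → EuclideanSpace ℝ n,
      (∀ t ∈ Icc 0 T, HasDerivAt y ((WithLp.equiv 2 (n → ℝ)).symm
        (A *ᵥ WithLp.equiv 2 (n → ℝ) (y t))) t) →
      (∀ t ∈ Icc 0 T, ‖y t‖ ≤ L) → ∀ t ∈ Icc a (T - a), ‖y t‖ ≤ C * L * exp (-(γ * a)) := by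
  choose w hw0 hw using fun i => exists_vecMul_eq_smul_of_isRoot_charpoly (hroot i)
  have hli : LinearIndependent ℂ w := by
    refine Module.End.eigenvectors_linearIndependent' (toLin' (A.map Complex.ofReal)ᵀ) μ hμ w
      fun i => Module.End.hasEigenvector_iff.2 ⟨?_, hw0 i⟩
    simpa [mulVec_transpose] using hw i
  exact exists_norm_le_mul_exp_of_hasDerivAt_of_eigenfunctionals
    (fun i => dotOfReal_mulVec (hw i)) (fun x => eq_zero_of_dotOfReal_eq_zero hli) hγ hre

end EigenvectorsOfMatrix

theorem stmt9 (A : Matrix (Fin 4) (Fin 4) ℝ)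
    (γ δ : ℝ) (hγ : 0 < γ) (hδ : δ ≠ 0)
    -- the complexification of A has exactly the four simple eigenvalues ±γ ± δi
    (hspec : ((A.map (fun r : ℝ => (r : ℂ))).charpoly).roots =
      {(γ : ℂ) + δ * Complex.I, (γ : ℂ) - δ * Complex.I,
        -(γ : ℂ) + δ * Complex.I, -(γ : ℂ) - δ * Complex.I}) :
    ∃ C > (0:ℝ), ∀ L : ℝ, 0 < L → ∀ T : ℝ, 0 < T → ∀ lam : ℝ, 0 < lam → lam ≤ γ →
      ∀ y : ℝ → EuclideanSpace ℝ (Fin 4),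
        (∀ t ∈ Set.Icc (0:ℝ) T,
          HasDerivAt y ((WithLp.equiv 2 (Fin 4 → ℝ)).symm
            (A.mulVec ((WithLp.equiv 2 (Fin 4 → ℝ)) (y t)))) t) →
        (∀ t ∈ Set.Icc (0:ℝ) T, ‖y t‖ ≤ L) →
        ∀ t ∈ Set.Icc (lam * T / (2 * γ)) (T - lam * T / (2 * γ)),
          ‖y t‖ ≤ C * L * Real.exp (-lam * T / 2) := by
  set μ : Fin 4 → ℂ := ![γ + δ * Complex.I, γ - δ * Complex.I, -γ + δ * Complex.I,
    -γ - δ * Complex.I]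
  have hroot : ∀ i, (A.map Complex.ofReal).charpoly.IsRoot (μ i) := fun i =>
    Polynomial.isRoot_of_mem_roots (by rw [hspec]; fin_cases i <;> simp [μ])
  have hμ : Function.Injective μ := by
    intro i j h
    fin_cases i <;> fin_cases j <;> simp [μ, Complex.ext_iff] at h ⊢ <;> grind
  have hre : ∀ i, γ ≤ |(μ i).re| := by
    intro i
    fin_cases i <;> simp [μ, abs_of_pos hγ]
  obtain ⟨C, hC⟩ := A.exists_norm_le_mul_exp_of_isRoot_charpoly hμ hroot hγ.le hre
  refine ⟨max C 1, by positivity, fun L hL T hT lam hlam _ y hy hyL t ht => ?_⟩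
  have hγa : -(γ * (lam * T / (2 * γ))) = -lam * T / 2 := by field_simp
  calc ‖y t‖ ≤ C * L * exp (-(γ * (lam * T / (2 * γ)))) :=
        hC L T _ (by positivity) y hy hyL t ht
    _ ≤ max C 1 * L * exp (-lam * T / 2) := by
        rw [hγa]
        gcongr
        exact le_max_left C 1
end

section
/- Let W : ℝ → [0,∞) be continuous and satisfy hypotheses (w2)–(w4), let q* be the constant of the one-dimensional interpolation inequality, let 0 ≤ q < q*/4 and fix 0 < δ < 1. Then there exists a constant C₂ > 0 such that for every open interval I = (a,b) with ℒ¹(I) > 1 and every C² function v on [a,b] with v ≤ 0 on I, one has E(v; I) ≥ C₂ ‖v + 1‖²_{L∞(I)}. -/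
open MeasureTheory Real

/-!
Cutting `(a, b)` into pieces of length between 1 and 2 and summing the interpolation inequality
over them gives `q* ∫ v'² ≤ ∫ W(v) + 4 ∫ v''²`, so for `q < q*/4` the negative term of the
energy is absorbed: `E(v; I) ≥ (1 - 4q/q*) (∫ W(v) + ∫ v''²)`. On the other hand, every `x ∈ I`
lies in a unit interval `J ⊆ I`, and the Sobolev inequality on `J` bounds `(v(x) + 1)²` by
`∫_J (v + 1)²` and `∫_J v'²`. Since `v ≤ 0`, the first is at most `c_W⁻¹ ∫_J W(v)`, and the
second is again controlled by the interpolation inequality.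
-/

/-- Hypotheses (w2)–(w4) for a continuous nonnegative potential,
together with the symmetry from (w1). -/
def WContSym (W : ℝ → ℝ) : Prop :=
  Continuous W ∧ (∀ s, W s = W (-s)) ∧ (∀ s, 0 ≤ W s) ∧
  (∀ s, 0 ≤ s → s ≠ 1 → 0 < W s) ∧ W 1 = 0 ∧
  ∃ cW : ℝ, 0 < cW ∧ cW ≤ 1 ∧ ∀ s, 0 ≤ s → cW * |s - 1|^2 ≤ W s

/-- Rescaled energy `E(v; (a,b))`. -/
noncomputable def Eres (W : ℝ → ℝ) (q : ℝ) (v : ℝ → ℝ) (a b : ℝ) : ℝ :=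
  ∫ x in a..b, (W (v x) - q * (deriv v x)^2 + (deriv (deriv v) x)^2)

open Set

def InterpolationInequality (W : ℝ → ℝ) (qs : ℝ) : Prop :=
  ∀ a b : ℝ, a < b → ∀ u : ℝ → ℝ, ContDiff ℝ 2 u →
    qs * ∫ x in a..b, (deriv u x)^2 ≤
      (1 / (b - a)^2) * (∫ x in a..b, W (u x)) +
        (b - a)^2 * ∫ x in a..b, (deriv (deriv u) x)^2

theorem sq_le_two_integral_sq_add_integral_deriv_sq {f f' : ℝ → ℝ}
    (hf : ∀ t, HasDerivAt f (f' t) t) (hf' : Continuous f') {c x : ℝ} (hx : x ∈ Icc c (c + 1)) :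
    f x ^ 2 ≤ 2 * (∫ t in c..c + 1, f t ^ 2) + ∫ t in c..c + 1, f' t ^ 2 := by
  have hfc : Continuous f := continuous_iff_continuousAt.2 fun t => (hf t).continuousAt
  have hcc : c ≤ c + 1 := by linarith
  obtain ⟨y, hy, hymin⟩ :=
    isCompact_Icc.exists_isMinOn (nonempty_Icc.2 hcc) (hfc.pow 2).continuousOn
  have hmin : f y ^ 2 ≤ ∫ t in c..c + 1, f t ^ 2 := by
    simpa using intervalIntegral.integral_mono_on hcc (intervalIntegrable_const (μ := volume))
      ((hfc.pow 2).intervalIntegrable _ _) fun t ht => hymin ht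
  have hftc : ∫ t in y..x, 2 * f t * f' t = f x ^ 2 - f y ^ 2 :=
    intervalIntegral.integral_eq_sub_of_hasDerivAt
      (fun t _ => by simpa [mul_comm] using (hf t).pow 2)
      ((by fun_prop : Continuous fun t => 2 * f t * f' t).intervalIntegrable _ _)
  have hg : Continuous fun t => |2 * f t * f' t| := by fun_prop
  have hosc : |∫ t in y..x, 2 * f t * f' t| ≤ ∫ t in c..c + 1, (f t ^ 2 + f' t ^ 2) := by
    calc |∫ t in y..x, 2 * f t * f' t|
        ≤ |∫ t in y..x, (|2 * f t * f' t|)| := by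
          simpa only [Real.norm_eq_abs] using
            intervalIntegral.norm_integral_le_abs_integral_norm (f := fun t => 2 * f t * f' t)
              (μ := volume)
      _ ≤ |∫ t in c..c + 1, (|2 * f t * f' t|)| :=
          intervalIntegral.abs_integral_mono_interval
            (uIoc_subset_uIoc_of_uIcc_subset_uIcc
              (uIcc_subset_uIcc (Icc_subset_uIcc hy) (Icc_subset_uIcc hx)))
            (ae_of_all _ fun t => abs_nonneg _) (hg.intervalIntegrable _ _)
      _ = ∫ t in c..c + 1, |2 * f t * f' t| :=
          abs_of_nonneg (intervalIntegral.integral_nonneg hcc fun t _ => abs_nonneg _)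
      _ ≤ ∫ t in c..c + 1, (f t ^ 2 + f' t ^ 2) :=
          intervalIntegral.integral_mono_on hcc (hg.intervalIntegrable _ _)
            ((by fun_prop : Continuous fun t => f t ^ 2 + f' t ^ 2).intervalIntegrable _ _)
            fun t _ => abs_le.2 ⟨by nlinarith [sq_nonneg (f t + f' t)],
              by nlinarith [sq_nonneg (f t - f' t)]⟩
  rw [hftc, intervalIntegral.integral_add
    ((by fun_prop : Continuous fun t => f t ^ 2).intervalIntegrable _ _)
    ((by fun_prop : Continuous fun t => f' t ^ 2).intervalIntegrable _ _)] at hosc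
  linarith [(abs_le.1 hosc).2]

theorem exists_unit_Icc_subset_of_mem {a b x : ℝ} (hab : 1 ≤ b - a) (hx : x ∈ Icc a b) :
    ∃ c, a ≤ c ∧ c + 1 ≤ b ∧ x ∈ Icc c (c + 1) := by
  refine ⟨min x (b - 1), le_min hx.1 (by linarith), by linarith [min_le_right x (b - 1)],
    min_le_left _ _, ?_⟩
  rcases min_cases x (b - 1) with ⟨h, -⟩ | ⟨h, -⟩ <;> linarith [hx.2]

theorem integral_le_integral_of_forall_subinterval_length_mem_Icc {F G : ℝ → ℝ}
    (hF : Continuous F) (hG : Continuous G) {a b : ℝ} (hab : 1 ≤ b - a)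
    (h : ∀ s t, a ≤ s → t ≤ b → 1 ≤ t - s → t - s ≤ 2 → ∫ x in s..t, F x ≤ ∫ x in s..t, G x) :
    ∫ x in a..b, F x ≤ ∫ x in a..b, G x := by
  set N := ⌊b - a⌋₊
  have hN : (1 : ℝ) ≤ N := by exact_mod_cast Nat.le_floor (by exact_mod_cast hab)
  set L := (b - a) / N
  have hL1 : 1 ≤ L := (one_le_div (by positivity)).2 (Nat.floor_le (by linarith))
  have hL2 : L ≤ 2 := (div_le_iff₀ (by positivity)).2 (by linarith [Nat.lt_floor_add_one (b - a)])
  set p : ℕ → ℝ := fun k => a + k * L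
  have hpN : p N = b := by simp only [p, L]; field_simp; ring
  have hsum (H : ℝ → ℝ) (hH : Continuous H) :
      ∑ k ∈ Finset.range N, ∫ x in p k..p (k + 1), H x = ∫ x in a..b, H x := by
    rw [intervalIntegral.sum_integral_adjacent_intervals fun k _ => hH.intervalIntegrable _ _, hpN]
    simp [p]
  rw [← hsum F hF, ← hsum G hG]
  refine Finset.sum_le_sum fun k hk => h _ _ ?_ ?_ ?_ ?_
  · exact le_add_of_nonneg_right (by positivity)
  · have hk : ((k + 1 : ℕ) : ℝ) ≤ N := by exact_mod_cast Finset.mem_range.1 hk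
    calc p (k + 1) ≤ p N := by simp only [p]; gcongr
      _ = b := hpN
  · simp only [p]; push_cast; linarith
  · simp only [p]; push_cast; linarith

theorem WContSym.exists_sq_add_one_le_of_nonpos {W : ℝ → ℝ} (hW : WContSym W) :
    ∃ cW > 0, ∀ s ≤ 0, cW * (s + 1) ^ 2 ≤ W s := by
  obtain ⟨-, hsymm, -, -, -, cW, hcW, -, hle⟩ := hW
  refine ⟨cW, hcW, fun s hs => ?_⟩
  have h := hle (-s) (neg_nonneg.2 hs)
  rwa [← hsymm, sq_abs, show -s - 1 = -(s + 1) by ring, neg_sq] at h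

theorem sSup_image_abs_sq_le {s : Set ℝ} {f : ℝ → ℝ} {M : ℝ} (hs : s.Nonempty)
    (h : ∀ x ∈ s, f x ^ 2 ≤ M) : sSup ((fun x => |f x|) '' s) ^ 2 ≤ M := by
  have hM : 0 ≤ M := (sq_nonneg _).trans (h _ hs.some_mem)
  have hsup : sSup ((fun x => |f x|) '' s) ≤ √M :=
    Real.sSup_le (by rintro _ ⟨x, hx, rfl⟩; exact Real.abs_le_sqrt (h x hx)) (Real.sqrt_nonneg M)
  calc sSup ((fun x => |f x|) '' s) ^ 2 ≤ √M ^ 2 :=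
        pow_le_pow_left₀ (Real.sSup_nonneg (by rintro _ ⟨x, -, rfl⟩; exact abs_nonneg _)) hsup 2
    _ = M := Real.sq_sqrt hM

section

variable {W : ℝ → ℝ} {qs : ℝ} {v : ℝ → ℝ}

theorem InterpolationInequality.integral_deriv_sq_le_of_length_le_two
    (hI : InterpolationInequality W qs) (hW0 : ∀ s, 0 ≤ W s) (hv : ContDiff ℝ 2 v) {s t : ℝ}
    (h1 : 1 ≤ t - s) (h2 : t - s ≤ 2) :
    qs * ∫ x in s..t, deriv v x ^ 2 ≤
      (∫ x in s..t, W (v x)) + 4 * ∫ x in s..t, deriv (deriv v) x ^ 2 := by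
  have hIW : 0 ≤ ∫ x in s..t, W (v x) :=
    intervalIntegral.integral_nonneg (by linarith) fun x _ => hW0 _
  have hIdd : 0 ≤ ∫ x in s..t, deriv (deriv v) x ^ 2 :=
    intervalIntegral.integral_nonneg (by linarith) fun x _ => sq_nonneg _
  calc qs * ∫ x in s..t, deriv v x ^ 2
      ≤ (1 / (t - s) ^ 2) * (∫ x in s..t, W (v x)) +
          (t - s) ^ 2 * ∫ x in s..t, deriv (deriv v) x ^ 2 := hI s t (by linarith) v hv
    _ ≤ (∫ x in s..t, W (v x)) + 4 * ∫ x in s..t, deriv (deriv v) x ^ 2 := by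
      gcongr
      · exact mul_le_of_le_one_left hIW (div_le_one_of_le₀ (by nlinarith) (by positivity))
      · nlinarith

theorem InterpolationInequality.integral_deriv_sq_le
    (hI : InterpolationInequality W qs) (hWc : Continuous W) (hW0 : ∀ s, 0 ≤ W s)
    (hv : ContDiff ℝ 2 v) {a b : ℝ} (hab : 1 ≤ b - a) :
    qs * ∫ x in a..b, deriv v x ^ 2 ≤
      (∫ x in a..b, W (v x)) + 4 * ∫ x in a..b, deriv (deriv v) x ^ 2 := by
  have hd : Continuous (deriv v) := hv.continuous_deriv one_le_two
  have hWv : Continuous fun x => W (v x) := hWc.comp hv.continuous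
  have hdd : Continuous (deriv (deriv v)) := by fun_prop
  have hsplit (s t : ℝ) : ∫ x in s..t, (W (v x) + 4 * deriv (deriv v) x ^ 2) =
      (∫ x in s..t, W (v x)) + 4 * ∫ x in s..t, deriv (deriv v) x ^ 2 := by
    rw [intervalIntegral.integral_add (hWv.intervalIntegrable _ _)
      ((by fun_prop : Continuous fun x => 4 * deriv (deriv v) x ^ 2).intervalIntegrable _ _),
      intervalIntegral.integral_const_mul]
  have h := integral_le_integral_of_forall_subinterval_length_mem_Icc
    (F := fun x => qs * deriv v x ^ 2) (G := fun x => W (v x) + 4 * deriv (deriv v) x ^ 2)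
    (by fun_prop) (by fun_prop) hab
    fun s t _ _ h1 h2 => by
      rw [intervalIntegral.integral_const_mul, hsplit]
      exact hI.integral_deriv_sq_le_of_length_le_two hW0 hv h1 h2
  rwa [intervalIntegral.integral_const_mul, hsplit] at h

theorem Eres_eq (hWc : Continuous W) (hv : ContDiff ℝ 2 v) (q a b : ℝ) :
    Eres W q v a b = (∫ x in a..b, W (v x)) - q * (∫ x in a..b, deriv v x ^ 2) +
      ∫ x in a..b, deriv (deriv v) x ^ 2 := by
  have hd : Continuous (deriv v) := hv.continuous_deriv one_le_two
  have hWv : IntervalIntegrable (fun x => W (v x)) volume a b :=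
    (hWc.comp hv.continuous).intervalIntegrable a b
  have hd2 : IntervalIntegrable (fun x => q * deriv v x ^ 2) volume a b :=
    (by fun_prop : Continuous fun x => q * deriv v x ^ 2).intervalIntegrable a b
  have hdd2 : IntervalIntegrable (fun x => deriv (deriv v) x ^ 2) volume a b :=
    (by fun_prop : Continuous fun x => deriv (deriv v) x ^ 2).intervalIntegrable a b
  rw [Eres, intervalIntegral.integral_add (hWv.sub hd2) hdd2,
    intervalIntegral.integral_sub hWv hd2, intervalIntegral.integral_const_mul]

theorem InterpolationInequality.mul_le_Eres
    (hI : InterpolationInequality W qs) (hWc : Continuous W) (hW0 : ∀ s, 0 ≤ W s)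
    (hqs : 0 < qs) {q : ℝ} (hq0 : 0 ≤ q) (hv : ContDiff ℝ 2 v) {a b : ℝ} (hab : 1 ≤ b - a) :
    (1 - 4 * q / qs) * ((∫ x in a..b, W (v x)) + ∫ x in a..b, deriv (deriv v) x ^ 2) ≤
      Eres W q v a b := by
  set IW := ∫ x in a..b, W (v x)
  set Idd := ∫ x in a..b, deriv (deriv v) x ^ 2
  have hIW : 0 ≤ IW := intervalIntegral.integral_nonneg (by linarith) fun x _ => hW0 _
  have hr : 0 ≤ q / qs := div_nonneg hq0 hqs.le
  have hd : q * ∫ x in a..b, deriv v x ^ 2 ≤ q / qs * (IW + 4 * Idd) := by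
    calc q * ∫ x in a..b, deriv v x ^ 2 = q / qs * (qs * ∫ x in a..b, deriv v x ^ 2) := by
          field_simp
      _ ≤ q / qs * (IW + 4 * Idd) :=
          mul_le_mul_of_nonneg_left (hI.integral_deriv_sq_le hWc hW0 hv hab) hr
  rw [Eres_eq hWc hv, mul_div_assoc]
  nlinarith [mul_nonneg hr hIW]

theorem InterpolationInequality.sq_add_one_le
    (hI : InterpolationInequality W qs) (hWc : Continuous W) (hW0 : ∀ s, 0 ≤ W s)
    (hqs : 0 < qs) {cW : ℝ} (hcW : 0 < cW) (hv : ContDiff ℝ 2 v) {a b x : ℝ} (hab : 1 ≤ b - a)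
    (hWv : ∀ t ∈ Icc a b, cW * (v t + 1) ^ 2 ≤ W (v t)) (hx : x ∈ Icc a b) :
    (v x + 1) ^ 2 ≤
      (2 / cW + 4 / qs) * ((∫ t in a..b, W (v t)) + ∫ t in a..b, deriv (deriv v) t ^ 2) := by
  obtain ⟨c, hac, hcb, hxc⟩ := exists_unit_Icc_subset_of_mem hab hx
  have hd : Continuous (deriv v) := hv.continuous_deriv one_le_two
  have hWvc : Continuous fun t => W (v t) := hWc.comp hv.continuous
  have hdd : Continuous (deriv (deriv v)) := by fun_prop
  have hsob : (v x + 1) ^ 2 ≤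
      2 * (∫ t in c..c + 1, (v t + 1) ^ 2) + ∫ t in c..c + 1, deriv v t ^ 2 :=
    sq_le_two_integral_sq_add_integral_deriv_sq
      (fun t => ((hv.differentiable two_ne_zero t).hasDerivAt).add_const 1) hd hxc
  have hpot : cW * ∫ t in c..c + 1, (v t + 1) ^ 2 ≤ ∫ t in c..c + 1, W (v t) := by
    rw [← intervalIntegral.integral_const_mul]
    exact intervalIntegral.integral_mono_on (by linarith)
      ((by fun_prop : Continuous fun t => cW * (v t + 1) ^ 2).intervalIntegrable _ _)
      (hWvc.intervalIntegrable _ _) fun t ht => hWv t ⟨by linarith [ht.1], by linarith [ht.2]⟩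
  have hder := hI.integral_deriv_sq_le_of_length_le_two hW0 hv (s := c) (t := c + 1)
    (by linarith) (by linarith)
  have hmonoW : ∫ t in c..c + 1, W (v t) ≤ ∫ t in a..b, W (v t) :=
    intervalIntegral.integral_mono_interval hac (by linarith) hcb
      (ae_of_all _ fun t => hW0 _) (hWvc.intervalIntegrable _ _)
  have hmonodd : ∫ t in c..c + 1, deriv (deriv v) t ^ 2 ≤ ∫ t in a..b, deriv (deriv v) t ^ 2 :=
    intervalIntegral.integral_mono_interval hac (by linarith) hcb
      (ae_of_all _ fun t => sq_nonneg _) ((hdd.pow 2).intervalIntegrable _ _)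
  set WJ := ∫ t in c..c + 1, W (v t)
  set ddJ := ∫ t in c..c + 1, deriv (deriv v) t ^ 2
  have hWJ : 0 ≤ WJ := intervalIntegral.integral_nonneg (by linarith) fun t _ => hW0 _
  have hddJ : 0 ≤ ddJ := intervalIntegral.integral_nonneg (by linarith) fun t _ => sq_nonneg _
  calc (v x + 1) ^ 2 ≤ 2 * (WJ / cW) + (WJ + 4 * ddJ) / qs := by
        linarith [(le_div_iff₀' hcW).2 hpot, (le_div_iff₀' hqs).2 hder]
    _ = 2 / cW * WJ + 1 / qs * WJ + 4 / qs * ddJ := by ring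
    _ ≤ (2 / cW + 4 / qs) * (WJ + ddJ) := by
        have : 1 / qs * WJ ≤ 4 / qs * WJ := by gcongr; norm_num
        nlinarith [mul_nonneg (by positivity : (0:ℝ) ≤ 2 / cW) hddJ]
    _ ≤ (2 / cW + 4 / qs) * ((∫ t in a..b, W (v t)) + ∫ t in a..b, deriv (deriv v) t ^ 2) := by
        gcongr

end

theorem stmt14_general (W : ℝ → ℝ) (hW : WContSym W) (qs : ℝ) (hqs : 0 < qs)
    -- qs is the constant of the one-dimensional interpolation inequality
    (hinterp : ∀ a b : ℝ, a < b → ∀ u : ℝ → ℝ, ContDiff ℝ 2 u →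
      qs * ∫ x in a..b, (deriv u x)^2 ≤
        (1 / (b - a)^2) * (∫ x in a..b, W (u x)) +
          (b - a)^2 * ∫ x in a..b, (deriv (deriv u) x)^2)
    (q : ℝ) (hq0 : 0 ≤ q) (hq : q < qs / 4) :
    ∃ C₂ > (0:ℝ), ∀ a b : ℝ, b - a > 1 →
      ∀ v : ℝ → ℝ, ContDiff ℝ 2 v → (∀ x ∈ Set.Ioo a b, v x ≤ 0) →
        C₂ * (sSup ((fun x => |v x + 1|) '' Set.Ioo a b))^2 ≤ Eres W q v a b := by
  have hI : InterpolationInequality W qs := hinterp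
  obtain ⟨cW, hcW, hWcoer⟩ := hW.exists_sq_add_one_le_of_nonpos
  obtain ⟨hWc, -, hW0, -⟩ := hW
  have hε : 0 < 1 - 4 * q / qs := by rw [sub_pos, div_lt_one hqs]; linarith
  set K := 2 / cW + 4 / qs
  have hK : 0 < K := by positivity
  refine ⟨(1 - 4 * q / qs) / K, by positivity, fun a b hab v hv hv0 => ?_⟩
  have hv0' : ∀ x ∈ Icc a b, v x ≤ 0 := by
    rw [← closure_Ioo (by linarith : a ≠ b)]
    exact closure_minimal hv0 (isClosed_le hv.continuous continuous_const)
  set IW := ∫ x in a..b, W (v x)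
  set Idd := ∫ x in a..b, deriv (deriv v) x ^ 2
  have hsup : sSup ((fun x => |v x + 1|) '' Ioo a b) ^ 2 ≤ K * (IW + Idd) :=
    sSup_image_abs_sq_le (nonempty_Ioo.2 (by linarith)) fun x hx =>
      hI.sq_add_one_le hWc hW0 hqs hcW hv hab.le (fun t ht => hWcoer _ (hv0' t ht))
        (Ioo_subset_Icc_self hx)
  calc (1 - 4 * q / qs) / K * sSup ((fun x => |v x + 1|) '' Ioo a b) ^ 2
      ≤ (1 - 4 * q / qs) / K * (K * (IW + Idd)) := by gcongr
    _ = (1 - 4 * q / qs) * (IW + Idd) := by field_simp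
    _ ≤ Eres W q v a b := hI.mul_le_Eres hWc hW0 hqs hq0 hv hab.le

theorem stmt14 (W : ℝ → ℝ) (hW : WContSym W) (qs : ℝ) (hqs : 0 < qs)
    -- qs is the constant of the one-dimensional interpolation inequality
    (hinterp : ∀ a b : ℝ, a < b → ∀ u : ℝ → ℝ, ContDiff ℝ 2 u →
      qs * ∫ x in a..b, (deriv u x)^2 ≤
        (1 / (b - a)^2) * (∫ x in a..b, W (u x)) +
          (b - a)^2 * ∫ x in a..b, (deriv (deriv u) x)^2)
    (q : ℝ) (hq0 : 0 ≤ q) (hq : q < qs / 4)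
    (δ : ℝ) (hδ0 : 0 < δ) (hδ1 : δ < 1) :
    ∃ C₂ > (0:ℝ), ∀ a b : ℝ, b - a > 1 →
      ∀ v : ℝ → ℝ, ContDiff ℝ 2 v → (∀ x ∈ Set.Ioo a b, v x ≤ 0) →
        C₂ * (sSup ((fun x => |v x + 1|) '' Set.Ioo a b))^2 ≤ Eres W q v a b :=
  stmt14_general W hW qs hqs hinterp q hq0 hq
end

section
/- Let W : ℝ → [0,∞) be of class C² with W(−1) = W'(−1) = 0, and let q ∈ ℝ. Then there exists a constant C₁ > 0, depending only on W and q, such that for every 0 < δ ≤ 1, every open interval I = (a,b) with ℒ¹(I) > 1, and all boundary data α = (α₀, α₁), β = (β₀, β₁) ∈ ℝ² with ‖α‖, ‖β‖ ≤ δ, there exists a C^∞ function φ : [a,b] → ℝ with φ(a) = −1 + α₀, φ'(a) = α₁, φ(b) = −1 + β₀, φ'(b) = β₁ and E(φ; I) ≤ C₁ δ². In particular, the infimum of E(·; I) over C² functions with these boundary conditions is at most C₁ δ². -/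
open MeasureTheory Real

set_option linter.unreachableTactic false
set_option linter.unusedTactic false
set_option linter.unusedVariables false

/-- One-sided boundary profile: value `u` at `a`, double zero at `b`,
exponential decay away from `a`. -/
noncomputable def prof (u c a b : ℝ) (x : ℝ) : ℝ :=
  (u + c*(x-a)) * ((b-x)^2*((b-a)⁻¹)^2) * Real.exp (a - x)

noncomputable def prof1 (u c a b : ℝ) (x : ℝ) : ℝ :=
  (c*((b-x)^2*((b-a)⁻¹)^2) - (u + c*(x-a))*(2*(b-x)*((b-a)⁻¹)^2)
     - (u + c*(x-a))*((b-x)^2*((b-a)⁻¹)^2)) * Real.exp (a - x)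

noncomputable def prof2 (u c a b : ℝ) (x : ℝ) : ℝ :=
  (-(4*c*(b-x)*((b-a)⁻¹)^2) + 2*(u + c*(x-a))*((b-a)⁻¹)^2
     - 2*(c*((b-x)^2*((b-a)⁻¹)^2) - (u + c*(x-a))*(2*(b-x)*((b-a)⁻¹)^2))
     + (u + c*(x-a))*((b-x)^2*((b-a)⁻¹)^2)) * Real.exp (a - x)

lemma prof1_continuous (u c a b : ℝ) : Continuous (prof1 u c a b) := by
  unfold prof1; fun_prop

lemma prof2_continuous (u c a b : ℝ) : Continuous (prof2 u c a b) := by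
  unfold prof2; fun_prop

lemma prof_hasDerivAt (u c a b x : ℝ) : HasDerivAt (prof u c a b) (prof1 u c a b x) x := by
  have hA : HasDerivAt (fun x => u + c*(x-a)) c x := by
    simpa using (((hasDerivAt_id x).sub_const a).const_mul c).const_add u
  have hQ : HasDerivAt (fun x => (b-x)^2*((b-a)⁻¹)^2) (-(2*(b-x))*((b-a)⁻¹)^2) x := by
    have := (((hasDerivAt_id x).const_sub b).pow 2).mul_const (((b-a)⁻¹)^2)
    refine this.congr_deriv ?_
    simp only [id_eq, Nat.cast_ofNat, pow_one]; ring
  have hE : HasDerivAt (fun x => Real.exp (a - x)) (-Real.exp (a - x)) x := by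
    have := (Real.hasDerivAt_exp (a - x)).comp x ((hasDerivAt_id x).const_sub a)
    exact this.congr_deriv (by ring)
  have h := (hA.mul hQ).mul hE
  refine h.congr_deriv ?_
  unfold prof1; simp only [Pi.mul_apply, Pi.sub_apply]; ring

lemma prof1_hasDerivAt (u c a b x : ℝ) : HasDerivAt (prof1 u c a b) (prof2 u c a b x) x := by
  have hA : HasDerivAt (fun x => u + c*(x-a)) c x := by
    simpa using (((hasDerivAt_id x).sub_const a).const_mul c).const_add u
  have hQ : HasDerivAt (fun x => (b-x)^2*((b-a)⁻¹)^2) (-(2*(b-x))*((b-a)⁻¹)^2) x := by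
    have := (((hasDerivAt_id x).const_sub b).pow 2).mul_const (((b-a)⁻¹)^2)
    refine this.congr_deriv ?_
    simp only [id_eq, Nat.cast_ofNat, pow_one]; ring
  have hL : HasDerivAt (fun x => 2*(b-x)*((b-a)⁻¹)^2) (-(2*((b-a)⁻¹)^2)) x := by
    have := (((hasDerivAt_id x).const_sub b).const_mul 2).mul_const (((b-a)⁻¹)^2)
    refine this.congr_deriv ?_
    ring
  have hE : HasDerivAt (fun x => Real.exp (a - x)) (-Real.exp (a - x)) x := by
    have := (Real.hasDerivAt_exp (a - x)).comp x ((hasDerivAt_id x).const_sub a)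
    exact this.congr_deriv (by ring)
  have h := (((hQ.const_mul c).sub (hA.mul hL)).sub (hA.mul hQ)).mul hE
  refine h.congr_deriv ?_
  unfold prof2; simp only [Pi.mul_apply, Pi.sub_apply]; ring

lemma prof_val_a (u c a b : ℝ) (h : b - a ≠ 0) : prof u c a b a = u := by
  unfold prof; field_simp; simp

lemma prof_val_b (u c a b : ℝ) : prof u c a b b = 0 := by unfold prof; simp

lemma prof1_val_a (u c a b : ℝ) (h : b - a ≠ 0) :
    prof1 u c a b a = c - 2*u*(b-a)⁻¹ - u := by
  unfold prof1; rw [sub_self, Real.exp_zero]; field_simp; ring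

lemma prof1_val_b (u c a b : ℝ) : prof1 u c a b b = 0 := by unfold prof1; simp
lemma prof_bounds (u c a b δ : ℝ) (hu : |u| ≤ δ) (hc : |c| ≤ 4*δ) (hδ : 0 ≤ δ)
    (hab : 1 < b - a) (x : ℝ) (hx : x ∈ Set.Icc a b) :
    |prof u c a b x| ≤ 64*δ*Real.exp ((a-x)/2) ∧
    |prof1 u c a b x| ≤ 64*δ*Real.exp ((a-x)/2) ∧
    |prof2 u c a b x| ≤ 64*δ*Real.exp ((a-x)/2) := by
  obtain ⟨hax, hxb⟩ := hx
  have hba : (0:ℝ) < b - a := by linarith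
  have hr0 : 0 < (b-a)⁻¹ := inv_pos.mpr hba
  have hr1 : (b-a)⁻¹ ≤ 1 := inv_le_one_of_one_le₀ (by linarith)
  have hS0 : (0:ℝ) ≤ b - x := by linarith
  have ht0 : (0:ℝ) ≤ x - a := by linarith
  have hSr : (b-x) * (b-a)⁻¹ ≤ 1 := by
    calc (b-x) * (b-a)⁻¹ ≤ (b-a) * (b-a)⁻¹ := by nlinarith
      _ = 1 := mul_inv_cancel₀ (ne_of_gt hba)
  have hk1 : (b-x)^2*((b-a)⁻¹)^2 ≤ 1 := by
    nlinarith [mul_le_one₀ hSr (mul_nonneg hS0 hr0.le) hSr]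
  have hk2 : (b-x)*((b-a)⁻¹)^2 ≤ 1 := by
    nlinarith [mul_le_one₀ hSr hr0.le hr1]
  have hk3 : ((b-a)⁻¹)^2 ≤ 1 := by nlinarith [mul_le_one₀ hr1 hr0.le hr1]
  have hk0a : (0:ℝ) ≤ (b-x)^2*((b-a)⁻¹)^2 := by positivity
  have hk0b : (0:ℝ) ≤ (b-x)*((b-a)⁻¹)^2 := by positivity
  have hA : |u + c*(x-a)| ≤ δ + 4*δ*(x-a) := by
    calc |u + c*(x-a)| ≤ |u| + |c| * |x-a| := by rw [← abs_mul]; exact abs_add_le _ _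
      _ ≤ δ + 4*δ*(x-a) := by
          rw [abs_of_nonneg ht0]
          nlinarith [abs_nonneg (x-a)]
  have hb1 : |(u + c*(x-a)) * ((b-x)^2*((b-a)⁻¹)^2)| ≤ 31*δ*(1+(x-a)) := by
    calc |(u + c*(x-a)) * ((b-x)^2*((b-a)⁻¹)^2)|
        = |u + c*(x-a)| * ((b-x)^2*((b-a)⁻¹)^2) := by rw [abs_mul, abs_of_nonneg hk0a]
      _ ≤ 31*δ*(1+(x-a)) := by
          have hAnn : (0:ℝ) ≤ δ + 4*δ*(x-a) := by linarith [mul_nonneg hδ ht0]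
          have h1 := mul_le_mul hA hk1 hk0a hAnn
          linarith [mul_nonneg hδ ht0]
  have hb2 : |c*((b-x)^2*((b-a)⁻¹)^2) - (u + c*(x-a))*(2*(b-x)*((b-a)⁻¹)^2)
      - (u + c*(x-a))*((b-x)^2*((b-a)⁻¹)^2)| ≤ 31*δ*(1+(x-a)) := by
    calc |c*((b-x)^2*((b-a)⁻¹)^2) - (u + c*(x-a))*(2*(b-x)*((b-a)⁻¹)^2)
          - (u + c*(x-a))*((b-x)^2*((b-a)⁻¹)^2)|
        ≤ |c*((b-x)^2*((b-a)⁻¹)^2)| + |(u + c*(x-a))*(2*(b-x)*((b-a)⁻¹)^2)|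
            + |(u + c*(x-a))*((b-x)^2*((b-a)⁻¹)^2)| := by
          have h2 := abs_sub (c*((b-x)^2*((b-a)⁻¹)^2)) ((u + c*(x-a))*(2*(b-x)*((b-a)⁻¹)^2))
          have h1 := abs_sub (c*((b-x)^2*((b-a)⁻¹)^2) - (u + c*(x-a))*(2*(b-x)*((b-a)⁻¹)^2))
            ((u + c*(x-a))*((b-x)^2*((b-a)⁻¹)^2))
          linarith
      _ = |c| * ((b-x)^2*((b-a)⁻¹)^2) + |u + c*(x-a)| * (2*((b-x)*((b-a)⁻¹)^2))
            + |u + c*(x-a)| * ((b-x)^2*((b-a)⁻¹)^2) := by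
          simp only [abs_mul, abs_sq, abs_two, abs_of_nonneg hS0, abs_of_nonneg hr0.le]
          ring
      _ ≤ 31*δ*(1+(x-a)) := by
          have hAnn : (0:ℝ) ≤ δ + 4*δ*(x-a) := by linarith [mul_nonneg hδ ht0]
          have t1 := mul_le_mul hc hk1 hk0a (by linarith : (0:ℝ) ≤ 4*δ)
          have t2 := mul_le_mul hA (by linarith : 2*((b-x)*((b-a)⁻¹)^2) ≤ 2)
            (by positivity) hAnn
          have t3 := mul_le_mul hA hk1 hk0a hAnn
          linarith [mul_nonneg hδ ht0]
  have hb3 : |(-(4*c*(b-x)*((b-a)⁻¹)^2) + 2*(u + c*(x-a))*((b-a)⁻¹)^2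
      - 2*(c*((b-x)^2*((b-a)⁻¹)^2) - (u + c*(x-a))*(2*(b-x)*((b-a)⁻¹)^2))
      + (u + c*(x-a))*((b-x)^2*((b-a)⁻¹)^2))| ≤ 31*δ*(1+(x-a)) := by
    calc |(-(4*c*(b-x)*((b-a)⁻¹)^2) + 2*(u + c*(x-a))*((b-a)⁻¹)^2
          - 2*(c*((b-x)^2*((b-a)⁻¹)^2) - (u + c*(x-a))*(2*(b-x)*((b-a)⁻¹)^2))
          + (u + c*(x-a))*((b-x)^2*((b-a)⁻¹)^2))|
        ≤ |4*c*(b-x)*((b-a)⁻¹)^2| + |2*(u + c*(x-a))*((b-a)⁻¹)^2|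
            + 2 * |c*((b-x)^2*((b-a)⁻¹)^2)| + 2 * |(u + c*(x-a))*(2*(b-x)*((b-a)⁻¹)^2)|
            + |(u + c*(x-a))*((b-x)^2*((b-a)⁻¹)^2)| := by
          have h1 := abs_add_le (-(4*c*(b-x)*((b-a)⁻¹)^2)) (2*(u + c*(x-a))*((b-a)⁻¹)^2)
          have h3 := abs_add_le (-(4*c*(b-x)*((b-a)⁻¹)^2) + 2*(u + c*(x-a))*((b-a)⁻¹)^2
            - 2*(c*((b-x)^2*((b-a)⁻¹)^2) - (u + c*(x-a))*(2*(b-x)*((b-a)⁻¹)^2)))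
            ((u + c*(x-a))*((b-x)^2*((b-a)⁻¹)^2))
          have h4 := abs_sub (-(4*c*(b-x)*((b-a)⁻¹)^2) + 2*(u + c*(x-a))*((b-a)⁻¹)^2)
            (2*(c*((b-x)^2*((b-a)⁻¹)^2) - (u + c*(x-a))*(2*(b-x)*((b-a)⁻¹)^2)))
          have h5 : |(2:ℝ)*(c*((b-x)^2*((b-a)⁻¹)^2) - (u + c*(x-a))*(2*(b-x)*((b-a)⁻¹)^2))|
              = 2 * |c*((b-x)^2*((b-a)⁻¹)^2) - (u + c*(x-a))*(2*(b-x)*((b-a)⁻¹)^2)| := by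
            rw [abs_mul]; norm_num
          have h6 : |c*((b-x)^2*((b-a)⁻¹)^2) - (u + c*(x-a))*(2*(b-x)*((b-a)⁻¹)^2)|
              ≤ |c*((b-x)^2*((b-a)⁻¹)^2)| + |(u + c*(x-a))*(2*(b-x)*((b-a)⁻¹)^2)| := abs_sub _ _
          have h7 := abs_neg (4*c*(b-x)*((b-a)⁻¹)^2)
          linarith
      _ = 4 * |c| *((b-x)*((b-a)⁻¹)^2) + 2 * |u + c*(x-a)| *((b-a)⁻¹)^2
            + 2*(|c| *((b-x)^2*((b-a)⁻¹)^2)) + 4*(|u + c*(x-a)| *((b-x)*((b-a)⁻¹)^2))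
            + |u + c*(x-a)| *((b-x)^2*((b-a)⁻¹)^2) := by
          simp only [abs_mul, abs_sq, abs_two, abs_of_nonneg hS0, abs_of_nonneg hr0.le,
            abs_of_nonneg (by norm_num : (0:ℝ) ≤ (4:ℝ))]
          ring
      _ ≤ 31*δ*(1+(x-a)) := by
          have hAnn : (0:ℝ) ≤ δ + 4*δ*(x-a) := by linarith [mul_nonneg hδ ht0]
          have s1 := mul_le_mul hc hk2 hk0b (by linarith : (0:ℝ) ≤ 4*δ)
          have s2 := mul_le_mul hA hk3 (by positivity) hAnn
          have s3 := mul_le_mul hc hk1 hk0a (by linarith : (0:ℝ) ≤ 4*δ)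
          have s4 := mul_le_mul hA hk2 hk0b hAnn
          have s5 := mul_le_mul hA hk1 hk0a hAnn
          linarith [mul_nonneg hδ ht0]
  set u2 : ℝ := Real.exp ((a-x)/2) with hu2def
  clear_value u2
  have hu20 : 0 < u2 := by rw [hu2def]; exact Real.exp_pos _
  have hu21 : u2 ≤ 1 := by rw [hu2def]; exact Real.exp_le_one_iff.mpr (by linarith)
  have hE : Real.exp (a - x) = u2^2 := by
    rw [hu2def, sq, ← Real.exp_add]; ring_nf
  have hkey : (1 + (x-a)) * u2 ≤ 2 := by
    have h1 : (x-a)/2 + 1 ≤ Real.exp ((x-a)/2) := Real.add_one_le_exp _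
    have h2 : Real.exp ((x-a)/2) * u2 = 1 := by
      rw [hu2def, ← Real.exp_add, show (x-a)/2 + (a-x)/2 = 0 by ring, Real.exp_zero]
    have h3 : (1+(x-a)) ≤ 2 * Real.exp ((x-a)/2) := by linarith
    have h4 := mul_le_mul_of_nonneg_right h3 hu20.le
    have h5 : 2*Real.exp ((x-a)/2)*u2 = 2 := by rw [mul_assoc, h2]; ring
    linarith
  have habs : ∀ y : ℝ, |y| ≤ 31*δ*(1+(x-a)) → |y * Real.exp (a-x)| ≤ 64*δ*u2 := by
    intro y hy
    rw [abs_mul, abs_of_pos (Real.exp_pos _), hE]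
    calc |y| * u2^2 ≤ (31*δ*(1+(x-a))) * u2^2 := mul_le_mul_of_nonneg_right hy (sq_nonneg u2)
      _ = 31*δ*((1+(x-a))*u2)*u2 := by ring
      _ ≤ 31*δ*2*u2 := by
          have h6 := mul_le_mul_of_nonneg_left hkey
            (mul_nonneg (mul_nonneg (by norm_num : (0:ℝ) ≤ 31) hδ) hu20.le)
          linarith [h6]
      _ ≤ 64*δ*u2 := by linarith [mul_nonneg hδ hu20.le]
  exact ⟨habs _ hb1, habs _ hb2, habs _ hb3⟩
lemma abs_succ_le_of_mem_uIoc {t x : ℝ} (hx : x ∈ Set.uIoc (-1) t) : |x + 1| ≤ |t + 1| := by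
  rcases Set.mem_uIoc.mp hx with ⟨h1, h2⟩ | ⟨h1, h2⟩
  · rw [abs_of_pos (by linarith), abs_of_pos (by linarith)]; linarith
  · rw [abs_of_nonpos (by linarith), abs_of_neg (by linarith)]; linarith

lemma Wbound (W : ℝ → ℝ) (hW2 : ContDiff ℝ 2 W) (hWm1 : W (-1) = 0)
    (hWm1' : deriv W (-1) = 0) (K : ℝ) :
    ∃ M : ℝ, 0 ≤ M ∧ ∀ s : ℝ, |s + 1| ≤ K → W s ≤ M * (s + 1)^2 := by
  have h21 : (2 : WithTop ℕ∞) = 1 + 1 := by norm_num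
  have hW1 : ContDiff ℝ 1 (deriv W) := by
    rw [h21] at hW2
    exact (contDiff_succ_iff_deriv.mp hW2).2.2
  have hWd : Differentiable ℝ W := hW2.differentiable (by norm_num)
  have hW'd : Differentiable ℝ (deriv W) := hW1.differentiable one_ne_zero
  have hW''c : Continuous (deriv (deriv W)) := hW1.continuous_deriv le_rfl
  obtain ⟨C, hC⟩ := (isCompact_Icc (a := -1-K) (b := -1+K)).exists_bound_of_continuousOn
    hW''c.continuousOn
  set M := max C 0 with hM
  refine ⟨M, le_max_right _ _, fun s hs => ?_⟩
  -- first derivative bound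
  have key1 : ∀ t : ℝ, |t + 1| ≤ K → |deriv W t| ≤ M * |t + 1| := by
    intro t ht
    have hftc : ∫ x in (-1:ℝ)..t, deriv (deriv W) x = deriv W t - deriv W (-1) :=
      intervalIntegral.integral_deriv_eq_sub (fun x _ => hW'd x) (hW''c.intervalIntegrable _ _)
    have hb : ∀ x ∈ Set.uIoc (-1:ℝ) t, ‖deriv (deriv W) x‖ ≤ M := by
      intro x hx
      have h1 : |x + 1| ≤ K := le_trans (abs_succ_le_of_mem_uIoc hx) ht
      have h2 := abs_le.mp h1
      exact le_trans (hC x ⟨by linarith [h2.1], by linarith [h2.2]⟩) (le_max_left _ _)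
    have := intervalIntegral.norm_integral_le_of_norm_le_const hb
    rw [hftc, hWm1', sub_zero] at this
    simpa [abs_sub_comm, show t - (-1) = t + 1 by ring] using this
  -- value bound
  have hftc : ∫ x in (-1:ℝ)..s, deriv W x = W s - W (-1) :=
    intervalIntegral.integral_deriv_eq_sub (fun x _ => hWd x) ((hW1.continuous).intervalIntegrable _ _)
  have hb : ∀ x ∈ Set.uIoc (-1:ℝ) s, ‖deriv W x‖ ≤ M * |s + 1| := by
    intro x hx
    have h1 : |x + 1| ≤ |s + 1| := abs_succ_le_of_mem_uIoc hx
    calc ‖deriv W x‖ ≤ M * |x + 1| := key1 x (le_trans h1 hs)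
      _ ≤ M * |s + 1| := by apply mul_le_mul_of_nonneg_left h1 (le_max_right _ _)
  have h2 := intervalIntegral.norm_integral_le_of_norm_le_const hb
  rw [hftc, hWm1, sub_zero] at h2
  calc W s ≤ |W s| := le_abs_self _
    _ ≤ M * |s+1| * |s - (-1)| := h2
    _ = M * (s+1)^2 := by rw [show s - (-1) = s + 1 by ring, mul_assoc, abs_mul_abs_self, sq]

lemma exists_phi (W : ℝ → ℝ) (hWc : Continuous W) (q M δ a b α₀ α₁ β₀ β₁ : ℝ)
    (hM : 0 ≤ M) (hMb : ∀ s : ℝ, |s + 1| ≤ 128 → W s ≤ M * (s + 1)^2)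
    (hδ : 0 < δ) (hδ1 : δ ≤ 1) (hab : 1 < b - a)
    (hα₀ : |α₀| ≤ δ) (hα₁ : |α₁| ≤ δ) (hβ₀ : |β₀| ≤ δ) (hβ₁ : |β₁| ≤ δ) :
    ∃ φ : ℝ → ℝ, ContDiff ℝ (⊤ : ℕ∞) φ ∧
      φ a = -1 + α₀ ∧ deriv φ a = α₁ ∧ φ b = -1 + β₀ ∧ deriv φ b = β₁ ∧
      Eres W q φ a b ≤ (16384*(M + |q| + 1)) * δ^2 := by
  have hba : (0:ℝ) < b - a := by linarith
  have hba0 : b - a ≠ 0 := ne_of_gt hba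
  have hr0 : 0 < (b-a)⁻¹ := inv_pos.mpr hba
  have hr1 : (b-a)⁻¹ ≤ 1 := inv_le_one_of_one_le₀ (by linarith)
  set cα : ℝ := α₁ + α₀ + 2*α₀*(b-a)⁻¹ with hcα
  set cβ : ℝ := -β₁ + β₀ + 2*β₀*(b-a)⁻¹ with hcβ
  have habs2 : ∀ u₁ u₀ : ℝ, |u₁| ≤ δ → |u₀| ≤ δ → |u₁ + u₀ + 2*u₀*(b-a)⁻¹| ≤ 4*δ := by
    intro u₁ u₀ h1 h0
    have h2 : |2*u₀*(b-a)⁻¹| = 2* |u₀| *(b-a)⁻¹ := by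
      rw [abs_mul, abs_mul, abs_two, abs_of_nonneg hr0.le]
    have h3 : 2* |u₀| *(b-a)⁻¹ ≤ 2*δ := by nlinarith [abs_nonneg u₀]
    calc |u₁ + u₀ + 2*u₀*(b-a)⁻¹| ≤ |u₁ + u₀| + |2*u₀*(b-a)⁻¹| := abs_add_le _ _
      _ ≤ |u₁| + |u₀| + 2* |u₀| *(b-a)⁻¹ := by rw [h2]; linarith [abs_add_le u₁ u₀]
      _ ≤ 4*δ := by linarith
  have hcαb : |cα| ≤ 4*δ := habs2 α₁ α₀ hα₁ hα₀
  have hcβb : |cβ| ≤ 4*δ := by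
    have := habs2 (-β₁) β₀ (by rwa [abs_neg]) hβ₀
    simpa [hcβ] using this
  clear_value cα cβ
  set φ : ℝ → ℝ := fun y => -1 + prof α₀ cα a b y + prof β₀ cβ a b (a+b-y) with hφ
  set φ1 : ℝ → ℝ := fun y => prof1 α₀ cα a b y - prof1 β₀ cβ a b (a+b-y) with hφ1
  set φ2 : ℝ → ℝ := fun y => prof2 α₀ cα a b y + prof2 β₀ cβ a b (a+b-y) with hφ2
  have hrefl : ∀ x : ℝ, HasDerivAt (fun y => prof β₀ cβ a b (a+b-y))
      (-(prof1 β₀ cβ a b (a+b-x))) x := by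
    intro x
    have h := (prof_hasDerivAt β₀ cβ a b (a+b-x)).comp x ((hasDerivAt_id x).const_sub (a+b))
    refine h.congr_deriv ?_
    · ring
  have hrefl1 : ∀ x : ℝ, HasDerivAt (fun y => prof1 β₀ cβ a b (a+b-y))
      (-(prof2 β₀ cβ a b (a+b-x))) x := by
    intro x
    have h := (prof1_hasDerivAt β₀ cβ a b (a+b-x)).comp x ((hasDerivAt_id x).const_sub (a+b))
    refine h.congr_deriv ?_
    · ring
  have hφd : ∀ x : ℝ, HasDerivAt φ (φ1 x) x := by
    intro x
    have h := ((prof_hasDerivAt α₀ cα a b x).const_add (-1)).add (hrefl x)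
    refine h.congr_deriv ?_
    all_goals simp only [hφ1]; ring
  have hφ1d : ∀ x : ℝ, HasDerivAt φ1 (φ2 x) x := by
    intro x
    have h := (prof1_hasDerivAt α₀ cα a b x).sub (hrefl1 x)
    refine h.congr_deriv ?_
    all_goals simp only [hφ2]; ring
  have hD1 : deriv φ = φ1 := funext fun x => (hφd x).deriv
  have hD2 : deriv φ1 = φ2 := funext fun x => (hφ1d x).deriv
  have hsmooth : ContDiff ℝ (⊤ : ℕ∞) φ := by
    rw [hφ]; unfold prof; fun_prop
  refine ⟨φ, hsmooth, ?_, ?_, ?_, ?_, ?_⟩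
  · show -1 + prof α₀ cα a b a + prof β₀ cβ a b (a+b-a) = -1 + α₀
    rw [show a+b-a = b by ring, prof_val_a _ _ _ _ hba0, prof_val_b]
    ring
  · rw [hD1]
    show prof1 α₀ cα a b a - prof1 β₀ cβ a b (a+b-a) = α₁
    rw [show a+b-a = b by ring, prof1_val_a _ _ _ _ hba0, prof1_val_b, hcα]
    ring
  · show -1 + prof α₀ cα a b b + prof β₀ cβ a b (a+b-b) = -1 + β₀
    rw [show a+b-b = a by ring, prof_val_a _ _ _ _ hba0, prof_val_b]
    ring
  · rw [hD1]
    show prof1 α₀ cα a b b - prof1 β₀ cβ a b (a+b-b) = β₁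
    rw [show a+b-b = a by ring, prof1_val_a _ _ _ _ hba0, prof1_val_b, hcβ]
    ring
  -- energy estimate
  have hEq : Eres W q φ a b = ∫ x in a..b, (W (φ x) - q*(φ1 x)^2 + (φ2 x)^2) := by
    unfold Eres
    rw [hD1, hD2]
  rw [hEq]
  set C : ℝ := 8192*(M + |q| + 1)*δ^2 with hC
  have hC0 : 0 ≤ C := by
    rw [hC]
    have h1 : (0:ℝ) ≤ M + |q| + 1 := by linarith [abs_nonneg q]
    positivity
  have hFle : ∀ x ∈ Set.Icc a b,
      W (φ x) - q*(φ1 x)^2 + (φ2 x)^2 ≤ C * (Real.exp (a-x) + Real.exp (x-b)) := by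
    intro x hx
    have hx' : a+b-x ∈ Set.Icc a b := ⟨by linarith [hx.2], by linarith [hx.1]⟩
    obtain ⟨hf0, hf1, hf2⟩ := prof_bounds α₀ cα a b δ hα₀ hcαb hδ.le hab x hx
    obtain ⟨hg0, hg1, hg2⟩ := prof_bounds β₀ cβ a b δ hβ₀ hcβb hδ.le hab (a+b-x) hx'
    rw [show a - (a+b-x) = x - b by ring] at hg0 hg1 hg2
    obtain ⟨hax, hxb⟩ := hx
    set EA : ℝ := Real.exp ((a-x)/2) with hEA
    set EB : ℝ := Real.exp ((x-b)/2) with hEB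
    have hEA0 : 0 < EA := by rw [hEA]; exact Real.exp_pos _
    have hEB0 : 0 < EB := by rw [hEB]; exact Real.exp_pos _
    have hEA1 : EA ≤ 1 := by rw [hEA]; exact Real.exp_le_one_iff.mpr (by linarith)
    have hEB1 : EB ≤ 1 := by rw [hEB]; exact Real.exp_le_one_iff.mpr (by linarith)
    have hEA2 : EA^2 = Real.exp (a-x) := by rw [hEA, sq, ← Real.exp_add]; ring_nf
    have hEB2 : EB^2 = Real.exp (x-b) := by rw [hEB, sq, ← Real.exp_add]; ring_nf
    clear_value EA EB
    have hδEA : δ * EA ≤ 1 := mul_le_one₀ hδ1 hEA0.le hEA1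
    have hδEB : δ * EB ≤ 1 := mul_le_one₀ hδ1 hEB0.le hEB1
    -- sum bounds
    have hsum0 : |φ x + 1| ≤ 64*δ*EA + 64*δ*EB := by
      have h : φ x + 1 = prof α₀ cα a b x + prof β₀ cβ a b (a+b-x) := by
        rw [hφ]; ring
      rw [h]
      exact (abs_add_le _ _).trans (add_le_add hf0 hg0)
    have hsum1 : |φ1 x| ≤ 64*δ*EA + 64*δ*EB := by
      rw [hφ1]
      exact (abs_sub _ _).trans (add_le_add hf1 hg1)
    have hsum2 : |φ2 x| ≤ 64*δ*EA + 64*δ*EB := by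
      rw [hφ2]
      exact (abs_add_le _ _).trans (add_le_add hf2 hg2)
    have hsq : ∀ z : ℝ, |z| ≤ 64*δ*EA + 64*δ*EB → z^2 ≤ 8192*δ^2*(EA^2 + EB^2) := by
      intro z hz
      have h1 : z^2 ≤ (64*δ*EA + 64*δ*EB)^2 := by
        rw [← sq_abs z]
        exact pow_le_pow_left₀ (abs_nonneg z) hz 2
      have h2 : (64*δ*EA + 64*δ*EB)^2 ≤ 8192*δ^2*(EA^2 + EB^2) := by
        linarith [mul_nonneg (sq_nonneg δ) (sq_nonneg (EA - EB))]
      linarith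
    have hWb : W (φ x) ≤ M * (8192*δ^2*(EA^2 + EB^2)) := by
      have h128 : |φ x + 1| ≤ 128 := by
        calc |φ x + 1| ≤ 64*δ*EA + 64*δ*EB := hsum0
          _ ≤ 128 := by linarith [hδEA, hδEB]
      have h1 : W (φ x) ≤ M * (φ x + 1)^2 := hMb _ h128
      have h2 : (φ x + 1)^2 ≤ 8192*δ^2*(EA^2 + EB^2) := hsq _ hsum0
      have h3 := mul_le_mul_of_nonneg_left h2 hM
      linarith
    have hq1 : -q*(φ1 x)^2 ≤ |q| * (8192*δ^2*(EA^2 + EB^2)) := by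
      have h1 : -q*(φ1 x)^2 ≤ |q| *(φ1 x)^2 :=
        mul_le_mul_of_nonneg_right (neg_le_abs q) (sq_nonneg _)
      have h2 : |q| *(φ1 x)^2 ≤ |q| * (8192*δ^2*(EA^2 + EB^2)) :=
        mul_le_mul_of_nonneg_left (hsq _ hsum1) (abs_nonneg q)
      linarith
    have h2b : (φ2 x)^2 ≤ 8192*δ^2*(EA^2 + EB^2) := hsq _ hsum2
    have : W (φ x) - q*(φ1 x)^2 + (φ2 x)^2 ≤ (M + |q| + 1) * (8192*δ^2*(EA^2 + EB^2)) := by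
      have hexp : (M + |q| + 1) * (8192*δ^2*(EA^2 + EB^2))
          = M * (8192*δ^2*(EA^2 + EB^2)) + |q| * (8192*δ^2*(EA^2 + EB^2))
            + 8192*δ^2*(EA^2 + EB^2) := by ring
      linarith
    calc W (φ x) - q*(φ1 x)^2 + (φ2 x)^2 ≤ (M + |q| + 1) * (8192*δ^2*(EA^2 + EB^2)) := this
      _ = C * (EA^2 + EB^2) := by rw [hC]; ring
      _ = C * (Real.exp (a-x) + Real.exp (x-b)) := by rw [hEA2, hEB2]
  -- integrate
  have hφc : Continuous φ := hsmooth.continuous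
  have hc1a : Continuous (prof1 α₀ cα a b) := prof1_continuous _ _ _ _
  have hc1b : Continuous (prof1 β₀ cβ a b) := prof1_continuous _ _ _ _
  have hc2a : Continuous (prof2 α₀ cα a b) := prof2_continuous _ _ _ _
  have hc2b : Continuous (prof2 β₀ cβ a b) := prof2_continuous _ _ _ _
  have hφ1c : Continuous φ1 := by rw [hφ1]; fun_prop
  have hφ2c : Continuous φ2 := by rw [hφ2]; fun_prop
  have hFc : Continuous (fun x => W (φ x) - q*(φ1 x)^2 + (φ2 x)^2) := by fun_prop
  have hGc : Continuous (fun x => C * (Real.exp (a-x) + Real.exp (x-b))) := by fun_prop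
  have hmono := intervalIntegral.integral_mono_on (by linarith : a ≤ b)
    (hFc.intervalIntegrable (μ := volume) a b) (hGc.intervalIntegrable (μ := volume) a b) hFle
  have hGval : (∫ x in a..b, C * (Real.exp (a-x) + Real.exp (x-b)))
      = C * (2 - 2*Real.exp (a-b)) := by
    have hH : ∀ x ∈ Set.uIcc a b, HasDerivAt (fun y => C * (-(Real.exp (a-y)) + Real.exp (y-b)))
        (C * (Real.exp (a-x) + Real.exp (x-b))) x := by
      intro x _
      have h1 : HasDerivAt (fun y => Real.exp (a - y)) (-Real.exp (a - x)) x := by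
        have := (Real.hasDerivAt_exp (a - x)).comp x ((hasDerivAt_id x).const_sub a)
        exact this.congr_deriv (by ring)
      have h2 : HasDerivAt (fun y => Real.exp (y - b)) (Real.exp (x - b)) x := by
        have := (Real.hasDerivAt_exp (x - b)).comp x ((hasDerivAt_id x).sub_const b)
        exact this.congr_deriv (by ring)
      have h := ((h1.neg).add h2).const_mul C
      refine h.congr_deriv ?_
      ring
    rw [intervalIntegral.integral_eq_sub_of_hasDerivAt hH (hGc.intervalIntegrable a b)]
    rw [show a - b = -(b-a) by ring, show b - b = (0:ℝ) by ring, show a - a = (0:ℝ) by ring,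
      Real.exp_zero]
    ring
  have hfinal : C * (2 - 2*Real.exp (a-b)) ≤ 16384*(M + |q| + 1) * δ^2 := by
    have he : 0 < Real.exp (a-b) := Real.exp_pos _
    have h1 : C * (2 - 2*Real.exp (a-b)) ≤ C * 2 := by
      linarith [mul_nonneg hC0 he.le]
    have h3 : C * 2 = 16384*(M + |q| + 1)*δ^2 := by rw [hC]; ring
    linarith
  calc (∫ x in a..b, (W (φ x) - q*(φ1 x)^2 + (φ2 x)^2))
      ≤ ∫ x in a..b, C * (Real.exp (a-x) + Real.exp (x-b)) := hmono
    _ = C * (2 - 2*Real.exp (a-b)) := hGval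
    _ ≤ 16384*(M + |q| + 1) * δ^2 := hfinal

theorem stmt15 (W : ℝ → ℝ) (hW2 : ContDiff ℝ 2 W) (hWnonneg : ∀ s, 0 ≤ W s)
    (hWm1 : W (-1) = 0) (hWm1' : deriv W (-1) = 0) (q : ℝ) :
    ∃ C₁ > (0:ℝ), ∀ δ : ℝ, 0 < δ → δ ≤ 1 → ∀ a b : ℝ, b - a > 1 →
      ∀ α₀ α₁ β₀ β₁ : ℝ,
        Real.sqrt (α₀^2 + α₁^2) ≤ δ → Real.sqrt (β₀^2 + β₁^2) ≤ δ →
      (∃ φ : ℝ → ℝ, ContDiff ℝ (⊤ : ℕ∞) φ ∧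
        φ a = -1 + α₀ ∧ deriv φ a = α₁ ∧ φ b = -1 + β₀ ∧ deriv φ b = β₁ ∧
        Eres W q φ a b ≤ C₁ * δ^2) ∧
      -- in particular, the infimum of E(·; I) over C² functions with these
      -- boundary conditions is at most C₁ δ²
      sInf { E : ℝ | ∃ u : ℝ → ℝ, ContDiff ℝ 2 u ∧
          u a = -1 + α₀ ∧ deriv u a = α₁ ∧ u b = -1 + β₀ ∧ deriv u b = β₁ ∧
          E = Eres W q u a b } ≤ C₁ * δ^2 := by
  obtain ⟨M, hM0, hMb⟩ := Wbound W hW2 hWm1 hWm1' 128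
  refine ⟨16384*(M + |q| + 1), by nlinarith [abs_nonneg q], ?_⟩
  intro δ hδ hδ1 a b hab α₀ α₁ β₀ β₁ hα hβ
  have key : ∀ u v : ℝ, Real.sqrt (u^2 + v^2) ≤ δ → |u| ≤ δ := by
    intro u v h
    calc |u| = Real.sqrt (u^2) := (Real.sqrt_sq_eq_abs u).symm
      _ ≤ Real.sqrt (u^2 + v^2) := Real.sqrt_le_sqrt (by nlinarith [sq_nonneg v])
      _ ≤ δ := h
  have hα₀ : |α₀| ≤ δ := key _ _ hα
  have hα₁ : |α₁| ≤ δ := key α₁ α₀ (by rwa [add_comm] at hα)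
  have hβ₀ : |β₀| ≤ δ := key _ _ hβ
  have hβ₁ : |β₁| ≤ δ := key β₁ β₀ (by rwa [add_comm] at hβ)
  obtain ⟨φ, hs, h1, h2, h3, h4, h5⟩ := exists_phi W hW2.continuous q M δ a b α₀ α₁ β₀ β₁
    hM0 hMb hδ hδ1 (by linarith) hα₀ hα₁ hβ₀ hβ₁
  have h5' : Eres W q φ a b ≤ 16384*(M + |q| + 1) * δ^2 := by linarith
  refine ⟨⟨φ, hs, h1, h2, h3, h4, h5'⟩, ?_⟩
  set S : Set ℝ := { E : ℝ | ∃ u : ℝ → ℝ, ContDiff ℝ 2 u ∧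
      u a = -1 + α₀ ∧ deriv u a = α₁ ∧ u b = -1 + β₀ ∧ deriv u b = β₁ ∧
      E = Eres W q u a b } with hS
  have hmem : Eres W q φ a b ∈ S := ⟨φ, hs.of_le (WithTop.coe_le_coe.mpr le_top), h1, h2, h3, h4, rfl⟩
  by_cases hbdd : BddBelow S
  · exact le_trans (csInf_le hbdd hmem) h5'
  · rw [Real.sInf_of_not_bddBelow hbdd]
    have h6 : (0:ℝ) ≤ 16384*(M + |q| + 1) := by nlinarith [abs_nonneg q]
    have := mul_nonneg h6 (sq_nonneg δ)
    linarith
end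

section
/- Let W : ℝ → [0,∞) satisfy hypotheses (w1)–(w4), let q > 0 with q < √(2W''(1)), and set γ := (1/2)(−q + √(2W''(1)))^{1/2}, δ := (1/2)(q + √(2W''(1)))^{1/2}. Then there exist constants ρ₀ > 0 and C > 0, depending only on W and q, such that for every s ∈ {−1, 1}, every 0 < ρ ≤ ρ₀ and all a, b ∈ ℝ with |a|, |b| ≤ ρ, the function η(x) := s + a e^{−γx} cos(δx) + b e^{−γx} sin(δx) satisfies |η(x) − s| + |η'(x)| + |η''(x)| ≤ C ρ e^{−γx} for all x > 0 and E(η; (0,∞)) = ∫₀^∞ ( W(η) − q(η')² + (η'')² ) dx ≤ C ρ². -/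
open MeasureTheory Real

/-- Hypotheses (w1)–(w4) on the double-well potential. -/
def DoubleWell (W : ℝ → ℝ) : Prop :=
  ContDiff ℝ 5 W ∧ (∀ s, W s = W (-s)) ∧ (∀ s, 0 ≤ W s) ∧
  (∀ s, 0 ≤ s → s ≠ 1 → 0 < W s) ∧ W 1 = 0 ∧ deriv W 1 = 0 ∧
  ∃ cW : ℝ, 0 < cW ∧ cW ≤ 1 ∧ ∀ s, 0 ≤ s → cW * |s - 1|^2 ≤ W s

/-!
Write the profile as `s + f` with `f x = a e^{-γx} cos δx + b e^{-γx} sin δx`. Differentiation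
maps `f` to a function of the same form, acting on the coefficients `(a, b)` by a linear map of
ℓ¹-norm at most `|γ| + |δ|`; hence `f`, `f'`, `f''` are all `O(ρ e^{-γx})`. Since `W` vanishes to
second order at both wells, `|W (s + f)| = O(f²)` as soon as `|f| ≤ 1`, so the energy density is
`O(ρ² e^{-2γx})`, which integrates over `(0, ∞)` to `O(ρ²)` because `γ > 0`.
-/

theorem exists_abs_le_mul_sq_of_deriv_eq_zero {W : ℝ → ℝ} (hW : ContDiff ℝ 2 W) {s : ℝ}
    (h₀ : W s = 0) (h₁ : deriv W s = 0) :
    ∃ L, 0 ≤ L ∧ ∀ t, |t - s| ≤ 1 → |W t| ≤ L * (t - s) ^ 2 := by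
  have hW' : ContDiff ℝ 1 (deriv W) := (contDiff_succ_iff_deriv.mp hW).2.2
  obtain ⟨L, hL⟩ := (isCompact_closedBall s 1).exists_bound_of_continuousOn
    (hW'.continuous_deriv le_rfl).continuousOn
  have hL₀ : 0 ≤ L := (norm_nonneg _).trans (hL s (Metric.mem_closedBall_self zero_le_one))
  have hderiv : ∀ u ∈ Metric.closedBall s 1, ‖deriv W u‖ ≤ L * |u - s| := by
    intro u hu
    simpa [h₁, Real.dist_eq] using (convex_closedBall s 1).norm_image_sub_le_of_norm_deriv_le
      (fun x _ => hW'.differentiable one_ne_zero x) hL (Metric.mem_closedBall_self zero_le_one) hu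
  refine ⟨L, hL₀, fun t ht => ?_⟩
  have hball : Metric.closedBall s |t - s| ⊆ Metric.closedBall s 1 :=
    Metric.closedBall_subset_closedBall ht
  have ht' : t ∈ Metric.closedBall s |t - s| := by simp [Real.dist_eq]
  have hmvt := (convex_closedBall s |t - s|).norm_image_sub_le_of_norm_deriv_le
    (fun x _ => hW.differentiable two_ne_zero x)
    (fun x hx => (hderiv x (hball hx)).trans
      (mul_le_mul_of_nonneg_left (by simpa [Real.dist_eq] using hx) hL₀))
    (Metric.mem_closedBall_self (abs_nonneg _)) ht'
  rw [h₀, sub_zero, Real.norm_eq_abs, Real.norm_eq_abs] at hmvt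
  simpa [mul_assoc, ← sq] using hmvt

theorem setIntegral_Ioi_le_of_abs_le_exp {F : ℝ → ℝ} (hF : Continuous F) {c k : ℝ} (hk : 0 < k)
    (h : ∀ x, 0 < x → |F x| ≤ c * exp (-k * x)) :
    ∫ x in Set.Ioi 0, F x ≤ c / k := by
  have hg : IntegrableOn (fun x => c * exp (-k * x)) (Set.Ioi 0) :=
    (exp_neg_integrableOn_Ioi 0 hk).const_mul c
  have hFint : IntegrableOn F (Set.Ioi 0) :=
    hg.mono' hF.aestronglyMeasurable ((ae_restrict_iff' measurableSet_Ioi).mpr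
      (ae_of_all _ fun x hx => (Real.norm_eq_abs _).trans_le (h x hx)))
  calc ∫ x in Set.Ioi 0, F x ≤ ∫ x in Set.Ioi 0, c * exp (-k * x) :=
        setIntegral_mono_on hFint hg measurableSet_Ioi fun x hx => (le_abs_self _).trans (h x hx)
    _ = c / k := by
      rw [integral_const_mul, integral_exp_mul_Ioi (by linarith)]
      simp [div_eq_mul_inv]

noncomputable def dampedOsc (γ δ a b x : ℝ) : ℝ :=
  a * exp (-γ * x) * cos (δ * x) + b * exp (-γ * x) * sin (δ * x)

section DampedOsc

variable (γ δ : ℝ)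

theorem hasDerivAt_dampedOsc (a b x : ℝ) :
    HasDerivAt (dampedOsc γ δ a b) (dampedOsc γ δ (-γ * a + δ * b) (-δ * a - γ * b) x) x := by
  have hexp := ((hasDerivAt_id x).const_mul (-γ)).exp
  have hcos := ((hasDerivAt_id x).const_mul δ).cos
  have hsin := ((hasDerivAt_id x).const_mul δ).sin
  refine (((hexp.const_mul a).mul hcos).add ((hexp.const_mul b).mul hsin)).congr_deriv ?_
  simp only [dampedOsc, id]
  ring

theorem deriv_dampedOsc (a b : ℝ) :
    deriv (dampedOsc γ δ a b) = dampedOsc γ δ (-γ * a + δ * b) (-δ * a - γ * b) :=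
  funext fun x => (hasDerivAt_dampedOsc γ δ a b x).deriv

theorem contDiff_dampedOsc (a b : ℝ) : ContDiff ℝ ⊤ (dampedOsc γ δ a b) := by
  unfold dampedOsc
  fun_prop

theorem abs_dampedOsc_le (a b x : ℝ) :
    |dampedOsc γ δ a b x| ≤ (|a| + |b|) * exp (-γ * x) := by
  have hcos : |a * exp (-γ * x) * cos (δ * x)| ≤ |a| * exp (-γ * x) := by
    rw [abs_mul, abs_mul, abs_exp]
    exact mul_le_of_le_one_right (by positivity) (abs_cos_le_one _)
  have hsin : |b * exp (-γ * x) * sin (δ * x)| ≤ |b| * exp (-γ * x) := by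
    rw [abs_mul, abs_mul, abs_exp]
    exact mul_le_of_le_one_right (by positivity) (abs_sin_le_one _)
  calc |dampedOsc γ δ a b x| ≤ _ := abs_add_le _ _
    _ ≤ (|a| + |b|) * exp (-γ * x) := by linarith

theorem exists_iteratedDeriv_dampedOsc_eq (a b : ℝ) (n : ℕ) :
    ∃ a' b', iteratedDeriv n (dampedOsc γ δ a b) = dampedOsc γ δ a' b' ∧
      |a'| + |b'| ≤ (|γ| + |δ|) ^ n * (|a| + |b|) := by
  induction n with
  | zero => exact ⟨a, b, iteratedDeriv_zero, by simp⟩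
  | succ n ih =>
    obtain ⟨a', b', hf, hab⟩ := ih
    refine ⟨-γ * a' + δ * b', -δ * a' - γ * b', by rw [iteratedDeriv_succ, hf, deriv_dampedOsc], ?_⟩
    calc |-γ * a' + δ * b'| + |-δ * a' - γ * b'|
        ≤ |γ| * |a'| + |δ| * |b'| + (|δ| * |a'| + |γ| * |b'|) := by
          gcongr
          · exact (abs_add_le _ _).trans_eq (by simp [abs_mul])
          · exact (abs_sub _ _).trans_eq (by simp [abs_mul])
      _ = (|γ| + |δ|) * (|a'| + |b'|) := by ring
      _ ≤ (|γ| + |δ|) ^ (n + 1) * (|a| + |b|) := by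
          rw [pow_succ', mul_assoc]
          gcongr

theorem abs_iteratedDeriv_dampedOsc_le (a b : ℝ) (n : ℕ) (x : ℝ) :
    |iteratedDeriv n (dampedOsc γ δ a b) x| ≤ (|γ| + |δ|) ^ n * (|a| + |b|) * exp (-γ * x) := by
  obtain ⟨a', b', hf, hab⟩ := exists_iteratedDeriv_dampedOsc_eq γ δ a b n
  rw [hf]
  exact (abs_dampedOsc_le γ δ a' b' x).trans (by gcongr)

theorem abs_add_abs_deriv_add_abs_deriv_deriv_dampedOsc_le (a b x : ℝ) :
    |dampedOsc γ δ a b x| + |deriv (dampedOsc γ δ a b) x| + |deriv (deriv (dampedOsc γ δ a b)) x|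
      ≤ (1 + (|γ| + |δ|) + (|γ| + |δ|) ^ 2) * (|a| + |b|) * exp (-γ * x) := by
  have h₀ := abs_iteratedDeriv_dampedOsc_le γ δ a b 0 x
  have h₁ := abs_iteratedDeriv_dampedOsc_le γ δ a b 1 x
  have h₂ := abs_iteratedDeriv_dampedOsc_le γ δ a b 2 x
  rw [iteratedDeriv_zero] at h₀
  rw [iteratedDeriv_one] at h₁
  rw [iteratedDeriv_succ, iteratedDeriv_one] at h₂
  linarith

end DampedOsc

theorem setIntegral_energy_dampedOsc_le {W : ℝ → ℝ} (hW : Continuous W) {s L : ℝ} (hL₀ : 0 ≤ L)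
    (hL : ∀ t, |t - s| ≤ 1 → |W t| ≤ L * (t - s) ^ 2) (q : ℝ) {γ : ℝ} (hγ : 0 < γ) (δ : ℝ)
    {a b : ℝ} (hab : |a| + |b| ≤ 1) :
    ∫ x in Set.Ioi 0, (W (s + dampedOsc γ δ a b x) - q * deriv (dampedOsc γ δ a b) x ^ 2
        + deriv (deriv (dampedOsc γ δ a b)) x ^ 2)
      ≤ (L + |q| * (|γ| + |δ|) ^ 2 + (|γ| + |δ|) ^ 4) * (|a| + |b|) ^ 2 / (2 * γ) := by
  rw [← iteratedDeriv_one, ← iteratedDeriv_succ]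
  set f := dampedOsc γ δ a b
  have hf : ContDiff ℝ ⊤ f := contDiff_dampedOsc γ δ a b
  have hcont (n : ℕ) : Continuous (iteratedDeriv n f) := hf.continuous_iteratedDeriv n le_top
  have hF : Continuous fun x =>
      W (s + f x) - q * iteratedDeriv 1 f x ^ 2 + iteratedDeriv 2 f x ^ 2 :=
    ((hW.comp (continuous_const.add hf.continuous)).sub
      (continuous_const.mul ((hcont 1).pow 2))).add ((hcont 2).pow 2)
  refine setIntegral_Ioi_le_of_abs_le_exp hF (by positivity) fun x hx => ?_
  set e := exp (-γ * x)
  have he : e ≤ 1 := exp_le_one_iff.2 (by nlinarith)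
  have hsq (n : ℕ) : iteratedDeriv n f x ^ 2 ≤ ((|γ| + |δ|) ^ n * (|a| + |b|) * e) ^ 2 := by
    rw [← sq_abs]
    gcongr
    exact abs_iteratedDeriv_dampedOsc_le γ δ a b n x
  have hfx : |f x| ≤ 1 := by
    simpa using (abs_iteratedDeriv_dampedOsc_le γ δ a b 0 x).trans
      (mul_le_one₀ (by simpa using hab) (exp_pos _).le he)
  have hW_fx : |W (s + f x)| ≤ L * f x ^ 2 := by simpa using hL (s + f x) (by simpa using hfx)
  have he2 : exp (-(2 * γ) * x) = e ^ 2 := by rw [← exp_nat_mul]; ring_nf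
  calc _ ≤ |W (s + f x)| + |q| * iteratedDeriv 1 f x ^ 2 + iteratedDeriv 2 f x ^ 2 := by
        refine (abs_add_le _ _).trans (add_le_add ((abs_sub _ _).trans_eq ?_) (abs_sq _).le)
        rw [abs_mul, abs_sq]
    _ ≤ L * ((|γ| + |δ|) ^ 0 * (|a| + |b|) * e) ^ 2 + |q| * ((|γ| + |δ|) ^ 1 * (|a| + |b|) * e) ^ 2
        + ((|γ| + |δ|) ^ 2 * (|a| + |b|) * e) ^ 2 := by
        refine add_le_add (add_le_add ?_ (mul_le_mul_of_nonneg_left (hsq 1) (abs_nonneg q))) (hsq 2)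
        exact hW_fx.trans (by simpa using mul_le_mul_of_nonneg_left (hsq 0) hL₀)
    _ = _ := by rw [he2]; ring

theorem stmt17_general (W : ℝ → ℝ) (hW : DoubleWell W)
    (q : ℝ) (hq : q < Real.sqrt (2 * deriv (deriv W) 1))
    (γ δ : ℝ)
    (hγ : γ = (1/2) * Real.sqrt (-q + Real.sqrt (2 * deriv (deriv W) 1))) :
    ∃ ρ₀ > (0:ℝ), ∃ C > (0:ℝ),
      ∀ s : ℝ, (s = -1 ∨ s = 1) → ∀ ρ : ℝ, 0 < ρ → ρ ≤ ρ₀ →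
      ∀ a b : ℝ, |a| ≤ ρ → |b| ≤ ρ →
      ∀ η : ℝ → ℝ,
      (η = fun x => s + a * Real.exp (-γ * x) * Real.cos (δ * x)
          + b * Real.exp (-γ * x) * Real.sin (δ * x)) →
      (∀ x : ℝ, 0 < x →
        |η x - s| + |deriv η x| + |deriv (deriv η) x| ≤ C * ρ * Real.exp (-γ * x)) ∧
      (∫ x in Set.Ioi (0:ℝ),
          (W (η x) - q * (deriv η x)^2 + (deriv (deriv η) x)^2)) ≤ C * ρ^2 := by
  obtain ⟨hW₅, hsymm, -, -, hW₁, hW'₁, -⟩ := hW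
  have hγ₀ : 0 < γ := hγ ▸ mul_pos one_half_pos (sqrt_pos.2 (by linarith))
  obtain ⟨L, hL₀, hL⟩ := exists_abs_le_mul_sq_of_deriv_eq_zero (hW₅.of_le (by norm_num)) hW₁ hW'₁
  have hwell : ∀ s : ℝ, (s = -1 ∨ s = 1) → ∀ t, |t - s| ≤ 1 → |W t| ≤ L * (t - s) ^ 2 := by
    rintro s (rfl | rfl) t ht
    · have := hL (-t) (by rwa [show -t - 1 = -(t - -1) by ring, abs_neg])
      rwa [← hsymm, show (-t - 1) ^ 2 = (t - -1) ^ 2 by ring] at this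
    · exact hL t ht
  set K := |γ| + |δ|
  refine ⟨1 / 2, one_half_pos, 2 * (1 + K + K ^ 2) + 2 * (L + |q| * K ^ 2 + K ^ 4) / γ,
    by positivity, ?_⟩
  rintro s hs ρ hρ hρ₀ a b ha hb η rfl
  have hη : (fun x => s + a * exp (-γ * x) * cos (δ * x) + b * exp (-γ * x) * sin (δ * x))
      = fun x => s + dampedOsc γ δ a b x := funext fun x => add_assoc _ _ _
  have hr : |a| + |b| ≤ 2 * ρ := by linarith
  rw [hη, deriv_const_add']
  constructor
  · intro x _
    rw [add_sub_cancel_left]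
    calc _ ≤ (1 + K + K ^ 2) * (|a| + |b|) * exp (-γ * x) :=
          abs_add_abs_deriv_add_abs_deriv_deriv_dampedOsc_le γ δ a b x
      _ ≤ (1 + K + K ^ 2) * (2 * ρ) * exp (-γ * x) := by gcongr
      _ = 2 * (1 + K + K ^ 2) * ρ * exp (-γ * x) := by ring
      _ ≤ _ := by gcongr; exact le_add_of_nonneg_right (by positivity)
  · calc _ ≤ (L + |q| * K ^ 2 + K ^ 4) * (|a| + |b|) ^ 2 / (2 * γ) :=
          setIntegral_energy_dampedOsc_le hW₅.continuous hL₀ (hwell s hs) q hγ₀ δ (by linarith)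
      _ ≤ (L + |q| * K ^ 2 + K ^ 4) * (2 * ρ) ^ 2 / (2 * γ) := by gcongr
      _ = 2 * (L + |q| * K ^ 2 + K ^ 4) / γ * ρ ^ 2 := by field_simp
      _ ≤ _ := by gcongr; exact le_add_of_nonneg_left (by positivity)

theorem stmt17 (W : ℝ → ℝ) (hW : DoubleWell W)
    (q : ℝ) (hq0 : 0 < q) (hq : q < Real.sqrt (2 * deriv (deriv W) 1))
    (γ δ : ℝ)
    (hγ : γ = (1/2) * Real.sqrt (-q + Real.sqrt (2 * deriv (deriv W) 1)))
    (hδ : δ = (1/2) * Real.sqrt (q + Real.sqrt (2 * deriv (deriv W) 1))) :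
    ∃ ρ₀ > (0:ℝ), ∃ C > (0:ℝ),
      ∀ s : ℝ, (s = -1 ∨ s = 1) → ∀ ρ : ℝ, 0 < ρ → ρ ≤ ρ₀ →
      ∀ a b : ℝ, |a| ≤ ρ → |b| ≤ ρ →
      ∀ η : ℝ → ℝ,
      (η = fun x => s + a * Real.exp (-γ * x) * Real.cos (δ * x)
          + b * Real.exp (-γ * x) * Real.sin (δ * x)) →
      (∀ x : ℝ, 0 < x →
        |η x - s| + |deriv η x| + |deriv (deriv η) x| ≤ C * ρ * Real.exp (-γ * x)) ∧
      (∫ x in Set.Ioi (0:ℝ),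
          (W (η x) - q * (deriv η x)^2 + (deriv (deriv η) x)^2)) ≤ C * ρ^2 :=
  stmt17_general W hW q hq γ δ hγ
end
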